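/- arXiv:1608.01239 — 4 statements merged into one kernel-verified Lean document; each statement's English description precedes it below -/
import Mathlib

section
/- Let $\Lambda$ be a finite dimensional Auslander algebra and $S$ a simple right $\Lambda$-module. Then $\mathrm{pd}_\Lambda(S) \le 1$ if and only if $S$ is isomorphic to a direct summand of the socle of $\Lambda$ (equivalently, $\mathrm{Hom}_\Lambda(S, \Lambda) \ne 0$). -/
universe u

open CategoryTheory

section Defs

variable (R : Type u) [Ring R]

/-- `pdLE R n M` : the module `M` has projective dimension at most `n`. -/
def pdLE : ℕ → ModuleCat.{u} R → Prop
  | 0, M => Module.Projective R M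
  | (n+1), M => ∃ (P : ModuleCat.{u} R) (f : P →ₗ[R] M),
      Module.Projective R P ∧ Function.Surjective f ∧
      pdLE n (ModuleCat.of R (LinearMap.ker f))

/-- The projective dimension of a module, as an element of `ℕ∞` (`⊤` if no
finite projective resolution exists). -/
noncomputable def projDim (M : ModuleCat.{u} R) : ℕ∞ :=
  sInf ((↑) '' {n : ℕ | pdLE R n M})

/-- `idLE R n M` : the module `M` has injective dimension at most `n`. -/
def idLE : ℕ → ModuleCat.{u} R → Prop
  | 0, M => Module.Injective R M
  | (n+1), M => ∃ (I : ModuleCat.{u} R) (f : M →ₗ[R] I),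
      Module.Injective R I ∧ Function.Injective f ∧
      idLE n (ModuleCat.of R (I ⧸ LinearMap.range f))

/-- The injective dimension of a module, as an element of `ℕ∞`. -/
noncomputable def injDim (M : ModuleCat.{u} R) : ℕ∞ :=
  sInf ((↑) '' {n : ℕ | idLE R n M})

/-- The global dimension (computed on finitely generated modules) is at most `n`. -/
def gldimLE (n : ℕ) : Prop :=
  ∀ M : ModuleCat.{u} R, Module.Finite R M → pdLE R n M

/-- The global dimension of `R`, computed on finitely generated modules. -/
noncomputable def globalDim : ℕ∞ :=
  sInf ((↑) '' {n : ℕ | gldimLE R n})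

/-- The socle of a module: the sum of all its simple submodules. -/
def socle (M : Type u) [AddCommGroup M] [Module R M] : Submodule R M :=
  sSup {S : Submodule R M | IsSimpleModule R S}

/-- An algebra is an Auslander algebra if its global dimension is at most `2` and
its dominant dimension is at least `2`, i.e. there is an exact sequence
`0 → R → I₀ → I₁` with `I₀`, `I₁` both projective and injective. -/
def IsAuslander : Prop :=
  gldimLE R 2 ∧
  ∃ (I₀ I₁ : ModuleCat.{u} R) (f : R →ₗ[R] I₀) (g : I₀ →ₗ[R] I₁),
    Module.Injective R I₀ ∧ Module.Projective R I₀ ∧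
    Module.Injective R I₁ ∧ Module.Projective R I₁ ∧
    Function.Injective f ∧ LinearMap.ker g = LinearMap.range f

/-- `f : M →ₗ[R] I` realizes `I` as an injective envelope of `M`: `I` is injective
and `f` is an essential embedding. -/
def IsInjectiveEnvelope {M I : Type u} [AddCommGroup M] [Module R M]
    [AddCommGroup I] [Module R I] (f : M →ₗ[R] I) : Prop :=
  Module.Injective R I ∧ Function.Injective f ∧
    ∀ N : Submodule R I, N ≠ ⊥ → N ⊓ LinearMap.range f ≠ ⊥

end Defs


/-! If `pd S ≤ 1` but `Hom(S, Λ) = 0`, choose `0 → K → Λⁿ → S → 0` with `K` projective. Since `I₁`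
is projective, `Hom(S, I₁) = 0` too, and the sequence `0 → Λ → I₀ → I₁` with `I₀` injective
shows that every map `K → Λ` extends to `Λⁿ`. As `K` is a direct summand of a free module, the
inclusion `K → Λⁿ` then splits, so `S` is projective, contradicting `Hom(S, Λ) = 0`.
Conversely, a simple submodule `T` of `Λ` has `pd T ≤ 1` because `pd (Λ ⧸ T) ≤ 2`. -/

open LinearMap (ker range)

section ProjDimOne

variable {R : Type u} [Ring R] {M N P Q : Type u}
  [AddCommGroup M] [Module R M] [AddCommGroup N] [Module R N]
  [AddCommGroup P] [Module R P] [AddCommGroup Q] [Module R Q]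

theorem Module.Projective.of_prod_left [Module.Projective R (M × N)] : Module.Projective R M :=
  .of_split (LinearMap.inl R M N) (LinearMap.fst R M N) rfl

theorem pdLE_one_of_exact {K : Type u} [AddCommGroup K] [Module R K]
    [Module.Projective R K] [Module.Projective R P] {j : K →ₗ[R] P} {π : P →ₗ[R] M}
    (hj : Function.Injective j) (hπ : Function.Surjective π) (hjπ : range j = ker π) :
    pdLE R 1 (ModuleCat.of R M) :=
  ⟨ModuleCat.of R P, π, inferInstance, hπ,
    .of_equiv ((LinearEquiv.ofInjective j hj).trans (LinearEquiv.ofEq _ _ hjπ))⟩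

theorem pdLE_one_of_projective [Module.Projective R M] : pdLE R 1 (ModuleCat.of R M) :=
  pdLE_one_of_exact (j := (0 : (⊥ : Submodule R M) →ₗ[R] M)) (π := LinearMap.id)
    (Function.injective_of_subsingleton _) Function.surjective_id (by simp)

theorem exists_linearEquiv_prod_of_exact {K X : Type u} [AddCommGroup K] [Module R K]
    [AddCommGroup X] [Module R X] [Module.Projective R P] {j : K →ₗ[R] X} {π : X →ₗ[R] P}
    (hj : Function.Injective j) (hπ : Function.Surjective π) (hjπ : range j = ker π) :
    Nonempty ((K × P) ≃ₗ[R] X) :=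
  let ⟨_, hs⟩ := Module.projective_lifting_property π LinearMap.id hπ
  ⟨lequivProdOfRightSplitExact hj hjπ hs⟩

theorem schanuel [Module.Projective R P] [Module.Projective R Q] {f : P →ₗ[R] M}
    {g : Q →ₗ[R] M} (hf : Function.Surjective f) (hg : Function.Surjective g) :
    Nonempty ((ker f × Q) ≃ₗ[R] (ker g × P)) := by
  let X := ker (f ∘ₗ LinearMap.fst R P Q - g ∘ₗ LinearMap.snd R P Q)
  have mem_X {p : P} {q : Q} : (p, q) ∈ X ↔ f p = g q := by simp [X, sub_eq_zero]
  obtain ⟨eP⟩ := exists_linearEquiv_prod_of_exact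
    (j := (LinearMap.inr R P Q ∘ₗ (ker g).subtype).codRestrict X fun y => by simp [X])
    (π := LinearMap.fst R P Q ∘ₗ X.subtype)
    (fun _ _ h => Subtype.ext congr((↑$h : P × Q).2))
    (fun p => let ⟨q, hq⟩ := hg (f p); ⟨⟨(p, q), mem_X.2 hq.symm⟩, rfl⟩)
    (by
      ext ⟨⟨p, q⟩, h⟩
      simp only [LinearMap.mem_range, LinearMap.mem_ker]
      refine ⟨fun ⟨y, hy⟩ => congr((↑$hy : P × Q).1).symm, fun (hp : p = 0) => ?_⟩
      subst hp
      exact ⟨⟨q, by simpa using (mem_X.1 h).symm⟩, rfl⟩)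
  obtain ⟨eQ⟩ := exists_linearEquiv_prod_of_exact
    (j := (LinearMap.inl R P Q ∘ₗ (ker f).subtype).codRestrict X fun y => by simp [X])
    (π := LinearMap.snd R P Q ∘ₗ X.subtype)
    (fun _ _ h => Subtype.ext congr((↑$h : P × Q).1))
    (fun q => let ⟨p, hp⟩ := hf (g q); ⟨⟨(p, q), mem_X.2 hp⟩, rfl⟩)
    (by
      ext ⟨⟨p, q⟩, h⟩
      simp only [LinearMap.mem_range, LinearMap.mem_ker]
      refine ⟨fun ⟨y, hy⟩ => congr((↑$hy : P × Q).2).symm, fun (hq : q = 0) => ?_⟩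
      subst hq
      exact ⟨⟨p, by simpa using mem_X.1 h⟩, rfl⟩)
  exact ⟨eQ.trans eP.symm⟩

theorem projective_ker_of_pdLE_one (h : pdLE R 1 (ModuleCat.of R M)) [Module.Projective R P]
    {π : P →ₗ[R] M} (hπ : Function.Surjective π) : Module.Projective R (ker π) := by
  obtain ⟨Q, q, hQ, hq, hker : Module.Projective R (ker q)⟩ := h
  obtain ⟨e⟩ := schanuel hπ hq
  have : Module.Projective R (ker π × Q) := .of_equiv e.symm
  exact .of_prod_left (N := Q)

theorem pdLE_one_of_linearEquiv (e : M ≃ₗ[R] N) (h : pdLE R 1 (ModuleCat.of R M)) :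
    pdLE R 1 (ModuleCat.of R N) := by
  obtain ⟨P, f, hP, hf, hker⟩ := h
  refine ⟨P, e.toLinearMap ∘ₗ f, hP, e.surjective.comp hf, ?_⟩
  rwa [LinearEquiv.ker_comp]

theorem pdLE_one_prod (hM : pdLE R 1 (ModuleCat.of R M)) (hN : pdLE R 1 (ModuleCat.of R N)) :
    pdLE R 1 (ModuleCat.of R (M × N)) := by
  obtain ⟨P, f, hP, hf, hkf : Module.Projective R (ker f)⟩ := hM
  obtain ⟨Q, g, hQ, hg, hkg : Module.Projective R (ker g)⟩ := hN
  exact pdLE_one_of_exact (j := (ker f).subtype.prodMap (ker g).subtype) (π := f.prodMap g)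
    (Subtype.val_injective.prodMap Subtype.val_injective) (hf.prodMap hg)
    (by rw [LinearMap.range_prodMap, LinearMap.ker_prodMap, Submodule.range_subtype,
      Submodule.range_subtype])

theorem pdLE_one_of_prod_left (h : pdLE R 1 (ModuleCat.of R (M × N))) :
    pdLE R 1 (ModuleCat.of R M) := by
  let tM := Finsupp.linearCombination R (id : M → M)
  let tN := Finsupp.linearCombination R (id : N → N)
  have hker := projective_ker_of_pdLE_one h (π := tM.prodMap tN)
    ((Finsupp.linearCombination_id_surjective R M).prodMap
      (Finsupp.linearCombination_id_surjective R N))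
  rw [LinearMap.ker_prodMap] at hker
  refine ⟨ModuleCat.of R (M →₀ R), tM, inferInstance,
    Finsupp.linearCombination_id_surjective R M, .of_split
      ((LinearMap.inl R _ _ ∘ₗ (ker tM).subtype).codRestrict _ fun x => by simp)
      ((LinearMap.fst R _ _ ∘ₗ ((ker tM).prod (ker tN)).subtype).codRestrict _
        fun x => x.2.1) rfl⟩

theorem pdLE_one_ker_of_pdLE_two (h : pdLE R 2 (ModuleCat.of R M)) [Module.Projective R P]
    {π : P →ₗ[R] M} (hπ : Function.Surjective π) : pdLE R 1 (ModuleCat.of R (ker π)) := by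
  obtain ⟨Q, q, hQ, hq, hker⟩ := h
  obtain ⟨e⟩ := schanuel hπ hq
  exact pdLE_one_of_prod_left (N := Q)
    (pdLE_one_of_linearEquiv e.symm (pdLE_one_prod hker pdLE_one_of_projective))

theorem pdLE_one_of_gldimLE_two (h : gldimLE R 2) [Module.Projective R P] [Module.Finite R P]
    (T : Submodule R P) : pdLE R 1 (ModuleCat.of R T) :=
  pdLE_one_of_linearEquiv (LinearEquiv.ofEq _ _ T.ker_mkQ)
    (pdLE_one_ker_of_pdLE_two (h (ModuleCat.of R (P ⧸ T)) inferInstance) T.mkQ_surjective)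

end ProjDimOne

section DominantDimension

variable {R : Type u} [Ring R] {M P : Type u} [AddCommGroup M] [Module R M]
  [AddCommGroup P] [Module R P]

theorem subsingleton_linearMap_of_projective [Subsingleton (M →ₗ[R] R)]
    [Module.Projective R P] : Subsingleton (M →ₗ[R] P) := by
  refine subsingleton_of_forall_eq 0 fun h => ?_
  obtain ⟨s, hs⟩ := Module.projective_def'.mp ‹Module.Projective R P›
  have hsh : s ∘ₗ h = 0 := by
    ext x i
    exact congr($(Subsingleton.elim (Finsupp.lapply i ∘ₗ s ∘ₗ h) 0) x)
  calc h = (Finsupp.linearCombination R id ∘ₗ s) ∘ₗ h := by rw [hs, LinearMap.id_comp]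
    _ = 0 := by rw [LinearMap.comp_assoc, hsh, LinearMap.comp_zero]

theorem LinearMap.exists_comp_eq_of_range_le {N X : Type u} [AddCommGroup N] [Module R N]
    [AddCommGroup X] [Module R X] {f : N →ₗ[R] M} (hf : Function.Injective f) {h : X →ₗ[R] M}
    (H : range h ≤ range f) : ∃ h' : X →ₗ[R] N, f ∘ₗ h' = h :=
  ⟨(LinearEquiv.ofInjective f hf).symm.toLinearMap ∘ₗ h.codRestrict _ fun x => H ⟨x, rfl⟩, by
    ext x; simp⟩

/-- The copresentation `0 → R → I₀ → I₁` gives `Ext¹(M ⧸ K, R) = 0` as soon as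
`Hom(M ⧸ K, R) = 0`, because then also `Hom(M ⧸ K, I₁) = 0`. -/
theorem exists_extension_of_subsingleton_quotient_dual {I₀ I₁ : Type u} [AddCommGroup I₀]
    [Module R I₀] [AddCommGroup I₁] [Module R I₁] [Module.Injective R I₀] [Module.Projective R I₁]
    {f : R →ₗ[R] I₀} {g : I₀ →ₗ[R] I₁} (hf : Function.Injective f) (hfg : ker g = range f)
    (K : Submodule R M) [Subsingleton (M ⧸ K →ₗ[R] R)] (ψ : K →ₗ[R] R) :
    ∃ Ψ : M →ₗ[R] R, Ψ ∘ₗ K.subtype = ψ := by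
  obtain ⟨Ψ₀, hΨ₀⟩ := Module.Injective.out K.subtype K.injective_subtype (f ∘ₗ ψ)
  have hgΨ₀ : g ∘ₗ Ψ₀ = 0 := by
    have hK : K ≤ ker (g ∘ₗ Ψ₀) := fun x hx => by
      have hx' : Ψ₀ x = f (ψ ⟨x, hx⟩) := hΨ₀ ⟨x, hx⟩
      rw [LinearMap.mem_ker, LinearMap.comp_apply, hx', ← LinearMap.mem_ker, hfg]
      exact LinearMap.mem_range_self f _
    have : Subsingleton (M ⧸ K →ₗ[R] I₁) := subsingleton_linearMap_of_projective
    rw [← K.liftQ_mkQ _ hK, Subsingleton.elim (K.liftQ _ hK) 0, LinearMap.zero_comp]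
  obtain ⟨Ψ, hΨ⟩ :=
    LinearMap.exists_comp_eq_of_range_le hf (hfg ▸ LinearMap.range_le_ker_iff.mpr hgΨ₀)
  refine ⟨Ψ, LinearMap.ext fun x => hf ?_⟩
  simpa [← hΨ] using hΨ₀ x

theorem exists_retraction_of_forall_extension (K : Submodule R M) [Module.Finite R K]
    [Module.Projective R K] (hext : ∀ ψ : K →ₗ[R] R, ∃ Ψ : M →ₗ[R] R, Ψ ∘ₗ K.subtype = ψ) :
    ∃ d : M →ₗ[R] K, d ∘ₗ K.subtype = LinearMap.id := by
  obtain ⟨n, t, s, -, -, hts⟩ := Module.Finite.exists_comp_eq_id_of_projective R K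
  choose Ψ hΨ using fun i : Fin n => hext (LinearMap.proj i ∘ₗ s)
  have hΨs : LinearMap.pi Ψ ∘ₗ K.subtype = s := by
    ext x i
    exact congr($(hΨ i) x)
  exact ⟨t ∘ₗ LinearMap.pi Ψ, by rw [LinearMap.comp_assoc, hΨs, hts]⟩

theorem Module.Projective.quotient_of_retraction [Module.Projective R M] (K : Submodule R M)
    (d : M →ₗ[R] K) (hd : d ∘ₗ K.subtype = LinearMap.id) : Module.Projective R (M ⧸ K) := by
  have hK : K ≤ ker (LinearMap.id - K.subtype ∘ₗ d) := fun x hx => by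
    have hdx : d x = ⟨x, hx⟩ := congr($hd ⟨x, hx⟩)
    simp [hdx]
  refine .of_split (K.liftQ _ hK) K.mkQ (K.linearMap_qext ?_)
  ext x
  simp

theorem subsingleton_of_pdLE_one_of_subsingleton_dual [IsNoetherianRing R] {I₀ I₁ : Type u}
    [AddCommGroup I₀] [Module R I₀] [AddCommGroup I₁] [Module R I₁] [Module.Injective R I₀]
    [Module.Projective R I₁] {f : R →ₗ[R] I₀} {g : I₀ →ₗ[R] I₁} (hf : Function.Injective f)
    (hfg : ker g = range f) [Module.Finite R M] [Subsingleton (M →ₗ[R] R)]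
    (hM : pdLE R 1 (ModuleCat.of R M)) : Subsingleton M := by
  obtain ⟨n, π, hπ⟩ := Module.Finite.exists_fin' R M
  have : Module.Projective R (ker π) := projective_ker_of_pdLE_one hM hπ
  have : Module.Finite R (ker π) := Module.Finite.iff_fg.mpr (IsNoetherian.noetherian _)
  let e := π.quotKerEquivOfSurjective hπ
  have : Subsingleton ((Fin n → R) ⧸ ker π →ₗ[R] R) := ⟨fun a b => by
    simpa using congr($(Subsingleton.elim (a ∘ₗ e.symm.toLinearMap) (b ∘ₗ e.symm.toLinearMap))
      ∘ₗ e.toLinearMap)⟩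
  obtain ⟨d, hd⟩ := exists_retraction_of_forall_extension (ker π)
    (exists_extension_of_subsingleton_quotient_dual hf hfg (ker π))
  have := Module.Projective.quotient_of_retraction _ d hd
  have : Module.Projective R M := .of_equiv e
  have : Subsingleton (M →ₗ[R] M) := subsingleton_linearMap_of_projective
  exact ⟨fun x y => sub_eq_zero.mp congr($(Subsingleton.elim LinearMap.id (0 : M →ₗ[R] M)) (x - y))⟩

end DominantDimension

theorem exists_ne_zero_iff_exists_le_socle {R S M : Type u} [Ring R] [AddCommGroup S]
    [Module R S] [IsSimpleModule R S] [AddCommGroup M] [Module R M] :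
    (∃ f : S →ₗ[R] M, f ≠ 0) ↔ ∃ T : Submodule R M, T ≤ socle R M ∧ Nonempty (S ≃ₗ[R] T) := by
  refine ⟨fun ⟨f, hf⟩ => ?_, fun ⟨T, _, ⟨e⟩⟩ => ?_⟩
  · let e := LinearEquiv.ofInjective f (f.injective_of_ne_zero hf)
    exact ⟨range f, le_sSup (IsSimpleModule.congr e.symm), ⟨e⟩⟩
  · have := IsSimpleModule.nontrivial R S
    obtain ⟨x, hx⟩ := exists_ne (0 : S)
    exact ⟨T.subtype ∘ₗ e.toLinearMap, fun h => hx (e.map_eq_zero_iff.mp (Subtype.ext congr($h x)))⟩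

/-- Over a finite dimensional Auslander algebra `Λ`, a simple module `S` has projective
dimension at most `1` iff it is isomorphic to a (necessarily direct summand) simple
submodule of the socle of `Λ`, equivalently iff `Hom_Λ(S, Λ) ≠ 0`. -/
theorem stmt_7 (k Λ : Type u) [Field k] [Ring Λ] [Algebra k Λ] [FiniteDimensional k Λ]
    (hΛ : IsAuslander Λ)
    (S : Type u) [AddCommGroup S] [Module Λ S] (hS : IsSimpleModule Λ S) :
    (pdLE Λ 1 (ModuleCat.of Λ S) ↔
      ∃ T : Submodule Λ Λ, T ≤ socle Λ Λ ∧ Nonempty (S ≃ₗ[Λ] T)) ∧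
    (pdLE Λ 1 (ModuleCat.of Λ S) ↔ ∃ f : S →ₗ[Λ] Λ, f ≠ 0) := by
  obtain ⟨hgl, I₀, I₁, f, g, hI₀, -, -, hI₁, hf, hfg⟩ := hΛ
  have : IsNoetherianRing Λ := isNoetherian_of_tower k inferInstance
  have key : pdLE Λ 1 (ModuleCat.of Λ S) ↔ ∃ φ : S →ₗ[Λ] Λ, φ ≠ 0 := by
    refine ⟨fun h => ?_, fun ⟨φ, hφ⟩ => ?_⟩
    · by_contra! hzero
      have : Subsingleton (S →ₗ[Λ] Λ) := subsingleton_of_forall_eq 0 hzero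
      have := IsSimpleModule.nontrivial Λ S
      exact not_subsingleton S (subsingleton_of_pdLE_one_of_subsingleton_dual hf hfg h)
    · exact pdLE_one_of_linearEquiv (LinearEquiv.ofInjective φ (φ.injective_of_ne_zero hφ)).symm
        (pdLE_one_of_gldimLE_two hgl _)
  exact ⟨key.trans exists_ne_zero_iff_exists_le_socle, key⟩
end

section
/- Let $\Lambda$ be a finite dimensional Auslander algebra and $M$ a finitely generated right $\Lambda$-module. Then $\mathrm{pd}_\Lambda(M) \le 1$ if and only if $\mathrm{pd}_\Lambda(\mathrm{soc}\,M) \le 1$. -/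
universe u

open CategoryTheory

/-!
Over an Auslander algebra, a finitely generated module `M` has projective dimension at most one
exactly when it embeds into a projective-injective module. If `0 → K → Λⁿ → M → 0` with `K`
projective, the dominant dimension gives `K` a copresentation `0 → K → E₀ → E₁` by
projective-injectives, and extending `K → E₀` over `Λⁿ` embeds `M`. Conversely, a finitely
generated submodule `N` of a projective module sits in a finite free module `G`; since `G / N` has
projective dimension at most two, Schanuel's lemma gives `pd N ≤ 1`. Finally the socle of an
artinian module is essential, so an embedding of `soc M` into an injective module extends to an
embedding of `M`.
-/

open Function LinearMap

section ProjectiveDimension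

variable {Λ : Type u} [Ring Λ] {A B M P Q F : Type u}
  [AddCommGroup A] [Module Λ A] [AddCommGroup B] [Module Λ B] [AddCommGroup M] [Module Λ M]
  [AddCommGroup P] [Module Λ P] [AddCommGroup Q] [Module Λ Q] [AddCommGroup F] [Module Λ F]

theorem pdLE_of_linearEquiv {n : ℕ} (e : A ≃ₗ[Λ] B) (h : pdLE Λ n (ModuleCat.of Λ A)) :
    pdLE Λ n (ModuleCat.of Λ B) := by
  cases n with
  | zero =>
    have : Module.Projective Λ A := h
    exact Module.Projective.of_equiv e
  | succ n =>
    obtain ⟨P, f, hP, hf, hK⟩ := h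
    refine ⟨P, e.toLinearMap ∘ₗ f, hP, e.surjective.comp hf, ?_⟩
    rwa [LinearEquiv.ker_comp]

theorem range_inl_comp_subtype_ker (f : P →ₗ[Λ] M) :
    range (inl Λ P F ∘ₗ (ker f).subtype) = ker (f.prodMap (LinearMap.id : F →ₗ[Λ] F)) := by
  ext ⟨a, b⟩
  simp [eq_comm]

variable (F) in
noncomputable def kerProdMapIdEquiv (f : P →ₗ[Λ] M) :
    ker f ≃ₗ[Λ] ker (f.prodMap (LinearMap.id : F →ₗ[Λ] F)) :=
  (LinearEquiv.ofInjective (inl Λ P F ∘ₗ (ker f).subtype)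
    (inl_injective.comp (ker f).injective_subtype)).trans
      (LinearEquiv.ofEq _ _ (range_inl_comp_subtype_ker f))

theorem prodMap_id_surjective {f : P →ₗ[Λ] M} (hf : Surjective f) :
    Surjective (f.prodMap (LinearMap.id : F →ₗ[Λ] F)) :=
  Prod.map_surjective.mpr ⟨hf, surjective_id⟩

theorem pdLE_prod_of_projective {n : ℕ} [Module.Projective Λ F]
    (hA : pdLE Λ n (ModuleCat.of Λ A)) : pdLE Λ n (ModuleCat.of Λ (A × F)) := by
  cases n with
  | zero =>
    have : Module.Projective Λ A := hA
    exact inferInstanceAs (Module.Projective Λ (A × F))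
  | succ n =>
    obtain ⟨P, f, hP, hf, hK⟩ := hA
    exact ⟨ModuleCat.of Λ (P × F), f.prodMap LinearMap.id, inferInstance,
      prodMap_id_surjective hf, pdLE_of_linearEquiv (kerProdMapIdEquiv F f) hK⟩

theorem nonempty_ker_coprod_equiv [Module.Projective Λ Q] (p : P →ₗ[Λ] M) (hp : Surjective p)
    (q : Q →ₗ[Λ] M) : Nonempty (ker (p.coprod q) ≃ₗ[Λ] (ker p × Q)) := by
  let Z := ker (p.coprod q)
  let ι : ker p →ₗ[Λ] Z := codRestrict Z (inl Λ P Q ∘ₗ (ker p).subtype) fun k => by simp [Z]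
  let π : Z →ₗ[Λ] Q := snd Λ P Q ∘ₗ Z.subtype
  have hι : Injective ι := fun a b h => Subtype.ext (congrArg (fun z : Z => z.1.1) h)
  have hexact : Exact ι π := by
    rintro ⟨⟨a, b⟩, hab⟩
    constructor
    · intro hb
      simp only [π, LinearMap.comp_apply, Submodule.coe_subtype] at hb
      subst hb
      exact ⟨⟨a, by simpa [Z] using hab⟩, rfl⟩
    · rintro ⟨k, hk⟩
      rw [← hk]
      rfl
  have hπ : Surjective π := fun b => by
    obtain ⟨a, ha⟩ := hp (-q b)
    exact ⟨⟨(a, b), by simp [Z, ha]⟩, rfl⟩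
  obtain ⟨l, hl⟩ := Module.projective_lifting_property π LinearMap.id hπ
  exact ⟨(hexact.splitSurjectiveEquiv hι ⟨l, hl⟩).1⟩

theorem schanuel_s9 [Module.Projective Λ P] [Module.Projective Λ Q] (p : P →ₗ[Λ] M)
    (hp : Surjective p) (q : Q →ₗ[Λ] M) (hq : Surjective q) :
    Nonempty ((ker p × Q) ≃ₗ[Λ] (ker q × P)) := by
  obtain ⟨e₁⟩ := nonempty_ker_coprod_equiv p hp q
  obtain ⟨e₂⟩ := nonempty_ker_coprod_equiv q hq p
  have hswap :
      ker (p.coprod q) = (ker (q.coprod p)).comap (LinearEquiv.prodComm Λ P Q).toLinearMap := by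
    ext ⟨a, b⟩
    simp [add_comm]
  exact ⟨e₁.symm ≪≫ₗ LinearEquiv.ofEq _ _ hswap ≪≫ₗ LinearEquiv.ofSubmodule' _ _ ≪≫ₗ e₂⟩

theorem pdLE_ker_prod_of_pdLE_ker {n : ℕ} [Module.Projective Λ P] [Module.Projective Λ Q]
    (p : P →ₗ[Λ] M) (hp : Surjective p) (q : Q →ₗ[Λ] M) (hq : Surjective q)
    (h : pdLE Λ n (ModuleCat.of Λ (ker p))) : pdLE Λ n (ModuleCat.of Λ (ker q × P)) :=
  let ⟨e⟩ := schanuel_s9 p hp q hq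
  pdLE_of_linearEquiv e (pdLE_prod_of_projective h)

/-- Cancelling `F` at level `n + 1` reduces, through a free cover of `A` and Schanuel's lemma,
to cancelling it at level `n`. -/
theorem pdLE_of_pdLE_prod_projective (n : ℕ) [Module.Projective Λ F]
    (h : pdLE Λ n (ModuleCat.of Λ (A × F))) : pdLE Λ n (ModuleCat.of Λ A) := by
  induction n generalizing A F with
  | zero =>
    have : Module.Projective Λ (A × F) := h
    exact Module.Projective.of_split (inl Λ A F) (fst Λ A F) (by ext; simp)
  | succ n ih =>
    obtain ⟨P, r, hP, hr, hK⟩ := h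
    let φ := Finsupp.linearCombination Λ (id : A → A)
    have hφ : Surjective φ := Finsupp.linearCombination_id_surjective Λ A
    refine ⟨ModuleCat.of Λ (A →₀ Λ), φ, inferInstance, hφ, ?_⟩
    have hker := ih (pdLE_ker_prod_of_pdLE_ker r hr (φ.prodMap LinearMap.id)
      (prodMap_id_surjective hφ) hK)
    exact pdLE_of_linearEquiv (kerProdMapIdEquiv F φ).symm hker

theorem pdLE_ker_of_surjective {n : ℕ} [Module.Projective Λ Q]
    (hM : pdLE Λ (n + 1) (ModuleCat.of Λ M)) (q : Q →ₗ[Λ] M) (hq : Surjective q) :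
    pdLE Λ n (ModuleCat.of Λ (ker q)) :=
  let ⟨_, p, _, hp, hK⟩ := hM
  pdLE_of_pdLE_prod_projective n (pdLE_ker_prod_of_pdLE_ker p hp q hq hK)

end ProjectiveDimension

section Embedding

variable {Λ : Type u} [Ring Λ] {A B M N P E L W K : Type u}
  [AddCommGroup A] [Module Λ A] [AddCommGroup B] [Module Λ B] [AddCommGroup M] [Module Λ M]
  [AddCommGroup N] [Module Λ N] [AddCommGroup P] [Module Λ P] [AddCommGroup E] [Module Λ E]
  [AddCommGroup L] [Module Λ L] [AddCommGroup W] [Module Λ W] [AddCommGroup K] [Module Λ K]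

instance Module.Injective.prod [Module.Injective Λ A] [Module.Injective Λ B] :
    Module.Injective Λ (A × B) :=
  ⟨fun _ _ _ _ _ _ f hf g => by
    obtain ⟨gA, hgA⟩ := Module.Injective.out f hf (fst Λ A B ∘ₗ g)
    obtain ⟨gB, hgB⟩ := Module.Injective.out f hf (snd Λ A B ∘ₗ g)
    exact ⟨gA.prod gB, fun x => Prod.ext (hgA x) (hgB x)⟩⟩

instance Module.Projective.pi {ι : Type} [Fintype ι] [DecidableEq ι] [Module.Projective Λ A] :
    Module.Projective Λ (ι → A) :=
  Module.Projective.of_equiv (DFinsupp.linearEquivFunOnFintype (R := Λ) (M := fun _ : ι => A))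

variable (Λ) in
def EmbedsInProjectiveInjective (M : Type u) [AddCommGroup M] [Module Λ M] : Prop :=
  ∃ (W : ModuleCat.{u} Λ) (w : M →ₗ[Λ] W),
    Module.Projective Λ W ∧ Module.Injective Λ W ∧ Injective w

namespace EmbedsInProjectiveInjective

theorem of_projective_injective [Module.Projective Λ W] [Module.Injective Λ W] (w : M →ₗ[Λ] W)
    (hw : Injective w) : EmbedsInProjectiveInjective Λ M :=
  ⟨ModuleCat.of Λ W, w, ‹_›, ‹_›, hw⟩

theorem of_injective (hN : EmbedsInProjectiveInjective Λ N) (f : M →ₗ[Λ] N) (hf : Injective f) :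
    EmbedsInProjectiveInjective Λ M :=
  let ⟨W, w, hP, hI, hw⟩ := hN
  ⟨W, w ∘ₗ f, hP, hI, hw.comp hf⟩

theorem pi {ι : Type} [Fintype ι] [DecidableEq ι] (hM : EmbedsInProjectiveInjective Λ M) :
    EmbedsInProjectiveInjective Λ (ι → M) :=
  let ⟨_, w, _, _, hw⟩ := hM
  of_projective_injective (LinearMap.piMap fun _ : ι => w) (Pi.map_injective.mpr fun _ => hw)

theorem of_ker_le_range (φ : M →ₗ[Λ] N) (hN : EmbedsInProjectiveInjective Λ N)
    (μ : A →ₗ[Λ] M) (hμ : Injective μ) (hA : EmbedsInProjectiveInjective Λ A)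
    (hker : ker φ ≤ range μ) : EmbedsInProjectiveInjective Λ M := by
  obtain ⟨W₁, w₁, _, _, hw₁⟩ := hA
  obtain ⟨W₂, w₂, _, _, hw₂⟩ := hN
  obtain ⟨ψ, hψ⟩ := Module.Injective.extension_property Λ W₁ A M μ hμ w₁
  refine of_projective_injective (ψ.prod (w₂ ∘ₗ φ))
    ((injective_iff_map_eq_zero _).mpr fun x hx => ?_)
  obtain ⟨hψx, hφx⟩ := Prod.ext_iff.mp hx
  obtain ⟨a, rfl⟩ := hker (hw₂ (hφx.trans (map_zero w₂).symm))
  have : w₁ a = 0 := by rw [← hψ]; exact hψx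
  rw [(injective_iff_map_eq_zero w₁).mp hw₁ a this, map_zero]

/-- Extend `e` over `P` to `h`; the kernel of the induced map `P ⧸ range ι → E ⧸ range e` is the
image of `ker h`, which meets `range ι` trivially because `e` is injective. -/
theorem quotient_range (hP : EmbedsInProjectiveInjective Λ P) (ι : L →ₗ[Λ] P) (hι : Injective ι)
    (e : L →ₗ[Λ] E) (he : Injective e) [Module.Injective Λ E]
    (hE : EmbedsInProjectiveInjective Λ (E ⧸ range e)) :
    EmbedsInProjectiveInjective Λ (P ⧸ range ι) := by
  obtain ⟨h, hh⟩ := Module.Injective.extension_property Λ E L P ι hι e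
  have hhι (l : L) : h (ι l) = e l := LinearMap.congr_fun hh l
  have hle : range ι ≤ (range e).comap h := by
    rintro _ ⟨l, rfl⟩
    exact ⟨l, (hhι l).symm⟩
  refine of_ker_le_range ((range ι).mapQ (range e) h hle) hE ((range ι).mkQ ∘ₗ (ker h).subtype)
    ?_ (hP.of_injective _ (ker h).injective_subtype) ?_
  · refine (injective_iff_map_eq_zero _).mpr fun ⟨p, hp⟩ hp0 => ?_
    obtain ⟨l, rfl⟩ : p ∈ range ι := by simpa using hp0
    have : e l = 0 := by rw [← hhι]; exact hp
    simp [he.eq_iff' (map_zero e) |>.mp this]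
  · rintro x hx
    obtain ⟨p, rfl⟩ := (range ι).mkQ_surjective x
    obtain ⟨l, hl⟩ : h p ∈ range e := by simpa using hx
    refine ⟨⟨p - ι l, by simp [hhι, hl]⟩, ?_⟩
    simp

theorem quotient_range_comp_section (σ : L →ₗ[Λ] E) (hσ : Injective σ) (τ : E →ₗ[Λ] W)
    (hστ : ker τ = range σ) (hW : EmbedsInProjectiveInjective Λ W)
    (hL : EmbedsInProjectiveInjective Λ L) (i : K →ₗ[Λ] L) (c : L →ₗ[Λ] K)
    (hci : c ∘ₗ i = LinearMap.id) : EmbedsInProjectiveInjective Λ (E ⧸ range (σ ∘ₗ i)) := by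
  have hci' (k : K) : c (i k) = k := LinearMap.congr_fun hci k
  have hle : range (σ ∘ₗ i) ≤ ker τ := hστ ▸ range_comp_le_range i σ
  refine of_ker_le_range ((range (σ ∘ₗ i)).liftQ τ hle) hW
    ((range (σ ∘ₗ i)).mkQ ∘ₗ σ ∘ₗ (ker c).subtype) ?_
    (hL.of_injective _ (ker c).injective_subtype) ?_
  · refine (injective_iff_map_eq_zero _).mpr fun ⟨l, hl⟩ hl0 => ?_
    obtain ⟨k, hk⟩ : σ l ∈ range (σ ∘ₗ i) := by simpa using hl0
    have hil : i k = l := hσ hk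
    have : k = 0 := by rw [← hci' k, hil]; exact hl
    simp [← hil, this]
  · rintro x hx
    obtain ⟨y, rfl⟩ := (range (σ ∘ₗ i)).mkQ_surjective x
    obtain ⟨l, rfl⟩ : y ∈ range σ := by rw [← hστ]; simpa using hx
    refine ⟨⟨l - i (c l), by simp [hci']⟩, ?_⟩
    simp only [LinearMap.comp_apply, Submodule.coe_subtype, map_sub, Submodule.mkQ_apply]
    rw [sub_eq_self, Submodule.Quotient.mk_eq_zero]
    exact ⟨c l, rfl⟩

theorem of_pdLE_one [IsNoetherianRing Λ] {I₀ I₁ : Type u} [AddCommGroup I₀] [Module Λ I₀]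
    [AddCommGroup I₁] [Module Λ I₁] [Module.Projective Λ I₀] [Module.Injective Λ I₀]
    [Module.Projective Λ I₁] [Module.Injective Λ I₁] (f : Λ →ₗ[Λ] I₀) (hf : Injective f)
    (g : I₀ →ₗ[Λ] I₁) (hfg : ker g = range f) [Module.Finite Λ M]
    (hM : pdLE Λ 1 (ModuleCat.of Λ M)) : EmbedsInProjectiveInjective Λ M := by
  have hΛ : EmbedsInProjectiveInjective Λ Λ := of_projective_injective f hf
  obtain ⟨n, q, hq⟩ := Module.Finite.exists_fin' Λ M
  have : Module.Projective Λ (ker q) := pdLE_ker_of_surjective hM q hq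
  obtain ⟨m, c, hc⟩ := Module.Finite.exists_fin' Λ (ker q)
  obtain ⟨i, hci⟩ := Module.projective_lifting_property c LinearMap.id hc
  have hi : Injective i := LeftInverse.injective (LinearMap.congr_fun hci)
  let σ : (Fin m → Λ) →ₗ[Λ] Fin m → I₀ := LinearMap.piMap fun _ => f
  have hσ : Injective σ := Pi.map_injective.mpr fun _ => hf
  have hστ : ker (LinearMap.piMap fun _ : Fin m => g) = range σ := by
    have hg (a : I₀) : g a = 0 ↔ ∃ b, f b = a := by rw [← mem_ker, hfg]; rfl
    ext x
    simp [σ, funext_iff, hg, Classical.skolem]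
  have hE := quotient_range_comp_section σ hσ _ hστ
    (of_projective_injective LinearMap.id injective_id) hΛ.pi i c hci
  have hquot := quotient_range hΛ.pi (ker q).subtype (ker q).injective_subtype (σ ∘ₗ i)
    (hσ.comp hi) hE
  rw [Submodule.range_subtype] at hquot
  exact hquot.of_injective _ (q.quotKerEquivOfSurjective hq).symm.injective

end EmbedsInProjectiveInjective

theorem exists_injective_finsupp_of_injective [Module.Finite Λ N] [Module.Projective Λ W]
    (w : N →ₗ[Λ] W) (hw : Injective w) :
    ∃ (S : Finset W) (v : N →ₗ[Λ] ((S : Set W) →₀ Λ)), Injective v := by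
  classical
  obtain ⟨s, hs⟩ := Module.projective_def.mp ‹Module.Projective Λ W›
  obtain ⟨t, ht⟩ := Module.Finite.fg_top (R := Λ) (M := N)
  let S := t.sup fun x => (s (w x)).support
  have hS : Submodule.span Λ t ≤ (Finsupp.supported Λ Λ (S : Set W)).comap (s ∘ₗ w) :=
    Submodule.span_le.mpr fun x hx => (Finsupp.mem_supported Λ (s (w x))).mpr <|
      Finset.coe_subset.mpr (Finset.le_sup (f := fun x => (s (w x)).support) hx)
  let v := codRestrict (Finsupp.supported Λ Λ (S : Set W)) (s ∘ₗ w) fun x =>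
    hS (ht ▸ Submodule.mem_top (x := x))
  have hv : Injective v := fun x y hxy => hw (hs.injective (congrArg Subtype.val hxy))
  exact ⟨S, (Finsupp.supportedEquivFinsupp (S : Set W)).toLinearMap ∘ₗ v,
    (Finsupp.supportedEquivFinsupp (S : Set W)).injective.comp hv⟩

theorem pdLE_one_of_injective_into_projective (hgl : gldimLE Λ 2) [Module.Finite Λ N]
    [Module.Projective Λ W] (w : N →ₗ[Λ] W) (hw : Injective w) : pdLE Λ 1 (ModuleCat.of Λ N) := by
  obtain ⟨S, v, hv⟩ := exists_injective_finsupp_of_injective w hw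
  have hC := hgl (ModuleCat.of Λ (_ ⧸ range v)) (inferInstanceAs (Module.Finite Λ (_ ⧸ range v)))
  have hK := pdLE_ker_of_surjective hC (range v).mkQ (range v).mkQ_surjective
  rw [Submodule.ker_mkQ] at hK
  exact pdLE_of_linearEquiv (LinearEquiv.ofInjective v hv).symm hK

theorem pdLE_one_iff_embedsInProjectiveInjective (hΛ : IsAuslander Λ) [IsNoetherianRing Λ]
    [Module.Finite Λ M] :
    pdLE Λ 1 (ModuleCat.of Λ M) ↔ EmbedsInProjectiveInjective Λ M := by
  obtain ⟨hgl, I₀, I₁, f, g, _, _, _, _, hf, hfg⟩ := hΛ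
  exact ⟨EmbedsInProjectiveInjective.of_pdLE_one f hf g hfg,
    fun ⟨_, w, _, _, hw⟩ => pdLE_one_of_injective_into_projective hgl w hw⟩

theorem eq_bot_of_inf_socle_eq_bot [IsArtinian Λ M] {N : Submodule Λ M}
    (h : N ⊓ socle Λ M = ⊥) : N = ⊥ := by
  obtain h0 | ⟨a, ha, haN⟩ := eq_bot_or_exists_atom_le N
  · exact h0
  · have : a ≤ socle Λ M := le_sSup (isSimpleModule_iff_isAtom.mpr ha)
    exact absurd (le_bot_iff.mp (h ▸ le_inf haN this)) ha.1

theorem embedsInProjectiveInjective_socle_iff [IsArtinian Λ M] :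
    EmbedsInProjectiveInjective Λ (socle Λ M) ↔ EmbedsInProjectiveInjective Λ M := by
  refine ⟨fun ⟨W, w, hP, hI, hw⟩ => ?_, fun h => h.of_injective _ (socle Λ M).injective_subtype⟩
  obtain ⟨ψ, hψ⟩ :=
    Module.Injective.extension_property Λ W _ M _ (socle Λ M).injective_subtype w
  refine ⟨W, ψ, hP, hI, ker_eq_bot.mp (eq_bot_of_inf_socle_eq_bot (eq_bot_iff.mpr ?_))⟩
  rintro x ⟨hx, hxs⟩
  have : w ⟨x, hxs⟩ = 0 := by rw [← hψ]; exact hx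
  simpa using (injective_iff_map_eq_zero w).mp hw _ this

end Embedding

/-- Over a finite dimensional Auslander algebra, a finitely generated module has
projective dimension at most `1` iff its socle does. -/
theorem stmt_9 (k Λ : Type u) [Field k] [Ring Λ] [Algebra k Λ] [FiniteDimensional k Λ]
    (hΛ : IsAuslander Λ)
    (M : Type u) [AddCommGroup M] [Module Λ M] [Module.Finite Λ M] :
    pdLE Λ 1 (ModuleCat.of Λ M) ↔ pdLE Λ 1 (ModuleCat.of Λ ↥(socle Λ M)) := by
  have : IsNoetherianRing Λ := isNoetherian_of_tower k inferInstance
  have : IsArtinianRing Λ := isArtinian_of_tower k inferInstance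
  rw [pdLE_one_iff_embedsInProjectiveInjective hΛ, pdLE_one_iff_embedsInProjectiveInjective hΛ,
    embedsInProjectiveInjective_socle_iff]
end

section
/- Let $\Lambda$ be a finite dimensional Auslander algebra, $M$ a finitely generated $\Lambda$-module with $\mathrm{pd}_\Lambda(M) \le 1$, and $S$ a simple submodule of $M$ with $\mathrm{pd}_\Lambda(S) = 2$. Then a contradiction arises; i.e., no simple submodule of a module of projective dimension at most 1 over an Auslander algebra can have projective dimension 2. -/
universe u

open CategoryTheory

section Defs

variable (R : Type u) [Ring R]

/-!
Present `M` as `0 → K → Λⁿ → M → 0`; since `pd M ≤ 1`, `K` is projective, and pulling back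
along `S ⊆ M` gives `0 → K → N → S → 0` with `N ⊆ Λⁿ`. Extend `K ↪ Λᵐ ↪ I₀ᵐ` along `K ↪ N`
(`I₀` is injective) and compose with `I₀ᵐ → I₁ᵐ`: the resulting `ψ : N → I₁ᵐ` vanishes on `K`.
If `ψ = 0` the extension lands in `Λᵐ`, the sequence splits and `S` embeds in `Λⁿ`; otherwise `ψ`
induces a nonzero, hence injective, map `S → I₁ᵐ`. Either way `S` embeds in a finitely generated
projective module `X`, and `gldim Λ ≤ 2` applied to `X ⧸ S` gives `pd S ≤ 1`.
-/

theorem Finsupp.exists_finset_range_le_supported {R S α M : Type*} [Semiring R] [AddCommMonoid S]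
    [Module R S] [Module.Finite R S] [AddCommMonoid M] [Module R M] (θ : S →ₗ[R] α →₀ M) :
    ∃ T : Finset α, LinearMap.range θ ≤ Finsupp.supported M R (T : Set α) := by
  classical
  obtain ⟨s, hs⟩ := Module.Finite.fg_top (R := R) (M := S)
  refine ⟨s.biUnion fun x => (θ x).support, ?_⟩
  rw [LinearMap.range_eq_map, ← hs, Submodule.map_span, Submodule.span_le]
  rintro _ ⟨x, hx, rfl⟩
  rw [SetLike.mem_coe, Finsupp.mem_supported, Finset.coe_subset]
  exact Finset.subset_biUnion_of_mem (fun x => (θ x).support) hx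

theorem Function.Exact.compLeft {R M N P : Type*} [Semiring R] [AddCommMonoid M] [Module R M]
    [AddCommMonoid N] [Module R N] [AddCommMonoid P] [Module R P] {f : M →ₗ[R] N} {g : N →ₗ[R] P}
    (h : Function.Exact f g) (ι : Type*) : Function.Exact (f.compLeft ι) (g.compLeft ι) := by
  refine fun y => ⟨fun hy => ?_, ?_⟩
  · choose x hx using fun i => (h (y i)).mp (congrFun hy i)
    exact ⟨x, funext hx⟩
  · rintro ⟨x, rfl⟩
    exact funext fun i => h.apply_apply_eq_zero (x i)

section

variable {R : Type u} [Ring R]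

theorem hasProjectiveDimensionLE_succ_iff_of_surjective {P M : Type u} [AddCommGroup P]
    [Module R P] [Module.Projective R P] [AddCommGroup M] [Module R M]
    {f : P →ₗ[R] M} (hf : Function.Surjective f) (n : ℕ) :
    HasProjectiveDimensionLE (ModuleCat.of R M) (n + 1) ↔
      HasProjectiveDimensionLE (ModuleCat.of R (LinearMap.ker f)) n :=
  have : Projective (ModuleCat.of R P) := (IsProjective.iff_projective P).mp inferInstance
  (f.shortExact_shortComplexKer hf).hasProjectiveDimensionLT_X₃_iff n this

theorem pdLE_iff_hasProjectiveDimensionLE (n : ℕ) (M : ModuleCat.{u} R) :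
    pdLE R n M ↔ HasProjectiveDimensionLE M n := by
  induction n generalizing M with
  | zero =>
    rw [← projective_iff_hasProjectiveDimensionLE_zero, ← IsProjective.iff_projective]
    rfl
  | succ n ih =>
    constructor
    · rintro ⟨P, f, hP, hf, hker⟩
      exact (hasProjectiveDimensionLE_succ_iff_of_surjective hf n).mpr ((ih _).mp hker)
    · intro hM
      have hf := Finsupp.linearCombination_id_surjective R M
      exact ⟨ModuleCat.of R (M →₀ R), _, inferInstance, hf,
        (ih _).mpr ((hasProjectiveDimensionLE_succ_iff_of_surjective hf n).mp hM)⟩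

theorem pdLE_succ_iff_of_surjective {P M : Type u} [AddCommGroup P] [Module R P]
    [Module.Projective R P] [AddCommGroup M] [Module R M] {f : P →ₗ[R] M}
    (hf : Function.Surjective f) (n : ℕ) :
    pdLE R (n + 1) (ModuleCat.of R M) ↔ pdLE R n (ModuleCat.of R (LinearMap.ker f)) := by
  rw [pdLE_iff_hasProjectiveDimensionLE, pdLE_iff_hasProjectiveDimensionLE,
    hasProjectiveDimensionLE_succ_iff_of_surjective hf]

theorem pdLE_of_linearEquiv_s11 {M N : Type u} [AddCommGroup M] [Module R M] [AddCommGroup N]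
    [Module R N] (e : M ≃ₗ[R] N) {n : ℕ} (h : pdLE R n (ModuleCat.of R M)) :
    pdLE R n (ModuleCat.of R N) := by
  rw [pdLE_iff_hasProjectiveDimensionLE] at h ⊢
  exact hasProjectiveDimensionLT_of_iso e.toModuleIso _

theorem pdLE_one_of_injective_of_finite_projective (hR : gldimLE R 2) {S X : Type u}
    [AddCommGroup S] [Module R S] [AddCommGroup X] [Module R X] [Module.Finite R X]
    [Module.Projective R X] {θ : S →ₗ[R] X} (hθ : Function.Injective θ) :
    pdLE R 1 (ModuleCat.of R S) := by
  have hQ := hR (ModuleCat.of R (X ⧸ LinearMap.range θ)) inferInstance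
  rw [pdLE_succ_iff_of_surjective (Submodule.mkQ_surjective _), Submodule.ker_mkQ] at hQ
  exact pdLE_of_linearEquiv_s11 (LinearEquiv.ofInjective θ hθ).symm hQ

theorem pdLE_one_of_injective_of_projective (hR : gldimLE R 2) {S Q : Type u}
    [AddCommGroup S] [Module R S] [Module.Finite R S] [AddCommGroup Q] [Module R Q]
    [Module.Projective R Q] {θ : S →ₗ[R] Q} (hθ : Function.Injective θ) :
    pdLE R 1 (ModuleCat.of R S) := by
  obtain ⟨s, hs⟩ := Module.projective_def'.mp (inferInstance : Module.Projective R Q)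
  have hsθ : Function.Injective (s ∘ₗ θ) :=
    (Function.LeftInverse.injective (g := Finsupp.linearCombination R id)
      (LinearMap.congr_fun hs)).comp hθ
  obtain ⟨T, hT⟩ := Finsupp.exists_finset_range_le_supported (s ∘ₗ θ)
  let e := Finsupp.supportedEquivFinsupp (M := R) (R := R) (T : Set Q)
  have : Module.Finite R (Finsupp.supported R R (T : Set Q)) := Module.Finite.equiv e.symm
  have : Module.Projective R (Finsupp.supported R R (T : Set Q)) :=
    Module.Projective.of_equiv e.symm
  exact pdLE_one_of_injective_of_finite_projective hR (X := Finsupp.supported R R (T : Set Q))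
    ((LinearMap.injective_codRestrict_iff fun x => hT ⟨x, rfl⟩).mpr hsθ)

theorem exists_splitting_obstruction {F J₀ J₁ K N : Type u} [AddCommGroup F] [Module R F]
    [AddCommGroup J₀] [Module R J₀] [Module.Injective R J₀] [AddCommGroup J₁] [Module R J₁]
    [AddCommGroup K] [Module R K] [AddCommGroup N] [Module R N]
    {a : F →ₗ[R] J₀} {b : J₀ →ₗ[R] J₁} (hab : Function.Exact a b) (ha : Function.Injective a)
    {s : K →ₗ[R] F} {p : F →ₗ[R] K} (hps : p ∘ₗ s = .id)
    {ι : K →ₗ[R] N} (hι : Function.Injective ι) :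
    ∃ ψ : N →ₗ[R] J₁, ψ ∘ₗ ι = 0 ∧ (ψ = 0 → ∃ r : N →ₗ[R] K, r ∘ₗ ι = .id) := by
  obtain ⟨h, hh⟩ := Module.Injective.extension_property R J₀ K N ι hι (a ∘ₗ s)
  refine ⟨b ∘ₗ h, ?_, fun hψ => ?_⟩
  · rw [LinearMap.comp_assoc, hh, ← LinearMap.comp_assoc, hab.linearMap_comp_eq_zero,
      LinearMap.zero_comp]
  have hrange : ∀ y, h y ∈ LinearMap.range a := fun y => by
    rw [← hab.linearMap_ker_eq]
    exact LinearMap.congr_fun hψ y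
  let e := LinearEquiv.ofInjective a ha
  refine ⟨p ∘ₗ e.symm.toLinearMap ∘ₗ h.codRestrict _ hrange, LinearMap.ext fun k => ?_⟩
  have hk : e.symm ⟨h (ι k), hrange _⟩ = s k :=
    ha (by rw [LinearEquiv.ofInjective_symm_apply]; exact LinearMap.congr_fun hh k)
  change p (e.symm ⟨h (ι k), hrange _⟩) = k
  rw [hk]
  exact LinearMap.congr_fun hps k

theorem exists_injective_of_isSimpleModule {F J₀ J₁ K N C : Type u} [AddCommGroup F]
    [Module R F] [AddCommGroup J₀] [Module R J₀] [Module.Injective R J₀] [AddCommGroup J₁]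
    [Module R J₁] [AddCommGroup K] [Module R K] [AddCommGroup N] [Module R N] [AddCommGroup C]
    [Module R C] [IsSimpleModule R C]
    {a : F →ₗ[R] J₀} {b : J₀ →ₗ[R] J₁} (hab : Function.Exact a b) (ha : Function.Injective a)
    {s : K →ₗ[R] F} {p : F →ₗ[R] K} (hps : p ∘ₗ s = .id)
    {ι : K →ₗ[R] N} {g : N →ₗ[R] C} (hιg : Function.Exact ι g) (hι : Function.Injective ι)
    (hg : Function.Surjective g) :
    (∃ σ : C →ₗ[R] N, Function.Injective σ) ∨ ∃ φ : C →ₗ[R] J₁, Function.Injective φ := by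
  obtain ⟨ψ, hψι, hsplit⟩ := exists_splitting_obstruction hab ha hps hι
  by_cases hψ : ψ = 0
  · obtain ⟨σ, hσ⟩ := ((hιg.split_tfae hι hg).out 1 0).mp (hsplit hψ)
    exact .inl ⟨σ, LinearMap.injective_of_comp_eq_id σ g hσ⟩
  · let φ := (LinearMap.range ι).liftQ ψ (LinearMap.range_le_ker_iff.mpr hψι) ∘ₗ
      (hιg.linearEquivOfSurjective hg).symm.toLinearMap
    refine .inr ⟨φ, LinearMap.injective_of_ne_zero fun hφ => hψ (LinearMap.ext fun y => ?_)⟩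
    simpa [φ] using LinearMap.congr_fun hφ (g y)

theorem pdLE_one_of_isSimpleModule_submodule [IsNoetherianRing R] (hR : gldimLE R 2)
    {I₀ I₁ : Type u} [AddCommGroup I₀] [Module R I₀] [Module.Injective R I₀] [AddCommGroup I₁]
    [Module R I₁] [Module.Projective R I₁] {a : R →ₗ[R] I₀} {b : I₀ →ₗ[R] I₁}
    (hab : Function.Exact a b) (ha : Function.Injective a)
    {M : Type u} [AddCommGroup M] [Module R M] [Module.Finite R M]
    (hM : pdLE R 1 (ModuleCat.of R M)) (S : Submodule R M) [IsSimpleModule R S] :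
    pdLE R 1 (ModuleCat.of R S) := by
  obtain ⟨n, q, hq⟩ := Module.Finite.exists_fin' R M
  have : Module.Projective R (LinearMap.ker q) := (pdLE_succ_iff_of_surjective hq 0).mp hM
  obtain ⟨m, p, s, -, -, hps⟩ :=
    Module.Finite.exists_comp_eq_id_of_projective R (LinearMap.ker q)
  have hle : LinearMap.ker q ≤ S.comap q := fun x hx => by simp_all
  have hexact : Function.Exact (Submodule.inclusion hle) (q.submoduleComap S) := fun y => by
    simp [Subtype.ext_iff]
  have : Module.Projective R (Fin m → I₁) :=
    Module.Projective.of_equiv DFinsupp.linearEquivFunOnFintype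
  rcases exists_injective_of_isSimpleModule (hab.compLeft (Fin m)) ha.comp_left hps hexact
    (Submodule.inclusion_injective hle) (q.submoduleComap_surjective_of_surjective S hq) with
    ⟨σ, hσ⟩ | ⟨φ, hφ⟩
  · exact pdLE_one_of_injective_of_projective hR
      (θ := (S.comap q).subtype ∘ₗ σ) ((S.comap q).injective_subtype.comp hσ)
  · exact pdLE_one_of_injective_of_projective hR hφ

end

/-- Over a finite dimensional Auslander algebra, a module of projective dimension at
most `1` has no simple submodule of projective dimension `2`. -/
theorem stmt_11 (k Λ : Type u) [Field k] [Ring Λ] [Algebra k Λ] [FiniteDimensional k Λ]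
    (hΛ : IsAuslander Λ)
    (M : Type u) [AddCommGroup M] [Module Λ M] [Module.Finite Λ M]
    (hM : pdLE Λ 1 (ModuleCat.of Λ M))
    (S : Submodule Λ M) (hS : IsSimpleModule Λ ↥S)
    (hpdS : projDim Λ (ModuleCat.of Λ ↥S) = 2) :
    False := by
  obtain ⟨hgl, I₀, I₁, a, b, _, -, -, _, ha, hab⟩ := hΛ
  have : IsNoetherianRing Λ := isNoetherian_of_tower k inferInstance
  have hS₁ : pdLE Λ 1 (ModuleCat.of Λ S) :=
    pdLE_one_of_isSimpleModule_submodule hgl (LinearMap.exact_iff.mpr hab) ha hM S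
  have : projDim Λ (ModuleCat.of Λ S) ≤ 1 := sInf_le ⟨1, hS₁, rfl⟩
  rw [hpdS] at this
  exact absurd this (by decide)
end Defs
end

section
/- Let $\Lambda$ be a finite dimensional algebra with global dimension at most 2 such that every injective module whose socle has projective dimension at most 1 is projective. Then $\Lambda$ is an Auslander algebra, i.e., its dominant dimension is at least 2. -/
universe u

open CategoryTheory

set_option linter.unusedSectionVars false

namespace Stmt13Aux


open LinearMap Submodule Function

variable {Λ : Type u} [Ring Λ]

/-- A surjection onto a projective module splits: domain ≃ ker × codomain. -/
theorem split_equiv {A B : Type u} [AddCommGroup A] [Module Λ A] [AddCommGroup B] [Module Λ B]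
    (f : A →ₗ[Λ] B) (hf : Surjective f) (hB : Module.Projective Λ B) :
    Nonempty ((LinearMap.ker f × B) ≃ₗ[Λ] A) := by
  haveI := hB
  obtain ⟨s, hs⟩ := Module.projective_lifting_property f LinearMap.id hf
  have hfs : ∀ b, f (s b) = b := fun b => LinearMap.congr_fun hs b
  let fwd : (LinearMap.ker f × B) →ₗ[Λ] A :=
    (LinearMap.ker f).subtype.comp (LinearMap.fst Λ (LinearMap.ker f) B) +
      s.comp (LinearMap.snd Λ (LinearMap.ker f) B)
  have hfwd : ∀ z : LinearMap.ker f × B, fwd z = (z.1 : A) + s z.2 := fun z => rfl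
  have key : ∀ z : LinearMap.ker f × B, f (fwd z) = z.2 := by
    rintro ⟨⟨x, hx⟩, b⟩
    have hx' : f x = 0 := hx
    simp [hfwd, map_add, hx', hfs]
  refine ⟨LinearEquiv.ofBijective fwd ⟨?_, ?_⟩⟩
  · intro p q h
    have h2 : p.2 = q.2 := by rw [← key p, ← key q, h]
    have h1 : (p.1 : A) = (q.1 : A) := by
      have := h
      rw [hfwd, hfwd, h2] at this
      exact add_right_cancel this
    exact Prod.ext (Subtype.ext h1) h2
  · intro a
    refine ⟨(⟨a - s (f a), ?_⟩, f a), ?_⟩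
    · simp [LinearMap.mem_ker, map_sub, hfs]
    · rw [hfwd]
      simp

/-- Schanuel's lemma. -/
theorem schanuel {P Q X : Type u} [AddCommGroup P] [Module Λ P] [AddCommGroup Q] [Module Λ Q]
    [AddCommGroup X] [Module Λ X]
    (f : P →ₗ[Λ] X) (g : Q →ₗ[Λ] X) (hf : Surjective f) (hg : Surjective g)
    (hP : Module.Projective Λ P) (hQ : Module.Projective Λ Q) :
    Nonempty ((LinearMap.ker f × Q) ≃ₗ[Λ] (LinearMap.ker g × P)) := by
  let d : (P × Q) →ₗ[Λ] X := f.comp (LinearMap.fst Λ P Q) - g.comp (LinearMap.snd Λ P Q)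
  have hd : ∀ z : P × Q, d z = f z.1 - g z.2 := fun z => rfl
  let π₁ : LinearMap.ker d →ₗ[Λ] P := (LinearMap.fst Λ P Q).comp (LinearMap.ker d).subtype
  let π₂ : LinearMap.ker d →ₗ[Λ] Q := (LinearMap.snd Λ P Q).comp (LinearMap.ker d).subtype
  have hπ₁ : ∀ z : LinearMap.ker d, π₁ z = (z : P × Q).1 := fun z => rfl
  have hπ₂ : ∀ z : LinearMap.ker d, π₂ z = (z : P × Q).2 := fun z => rfl
  have hmem : ∀ z : P × Q, z ∈ LinearMap.ker d ↔ f z.1 = g z.2 := by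
    intro z
    rw [LinearMap.mem_ker, hd, sub_eq_zero]
  have hπ₁s : Surjective π₁ := by
    intro p
    obtain ⟨q, hq⟩ := hg (f p)
    exact ⟨⟨(p, q), (hmem (p, q)).2 hq.symm⟩, rfl⟩
  have hπ₂s : Surjective π₂ := by
    intro q
    obtain ⟨p, hp⟩ := hf (g q)
    exact ⟨⟨(p, q), (hmem (p, q)).2 hp⟩, rfl⟩
  -- ker π₁ ≃ ker g
  have e₁ : Nonempty ((LinearMap.ker π₁) ≃ₗ[Λ] LinearMap.ker g) := by
    have hc : ∀ z : LinearMap.ker π₁, π₂.comp (LinearMap.ker π₁).subtype z ∈ LinearMap.ker g := by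
      rintro ⟨⟨⟨p, q⟩, hz⟩, hz1⟩
      have hp0 : p = 0 := hz1
      have := (hmem (p, q)).1 hz
      rw [hp0, map_zero] at this
      simpa [LinearMap.mem_ker, hπ₂] using this.symm
    refine ⟨LinearEquiv.ofBijective
      (LinearMap.codRestrict (LinearMap.ker g) (π₂.comp (LinearMap.ker π₁).subtype) hc) ⟨?_, ?_⟩⟩
    · rintro ⟨⟨⟨p, q⟩, hz⟩, hz1⟩ ⟨⟨⟨p', q'⟩, hz'⟩, hz1'⟩ h
      have hq : q = q' := congrArg (fun t => ((t : LinearMap.ker g) : Q)) h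
      have hp : p = 0 := hz1
      have hp' : p' = 0 := hz1'
      subst hq; subst hp; subst hp'
      rfl
    · rintro ⟨q, hq⟩
      have hq0 : g q = 0 := hq
      refine ⟨⟨⟨(0, q), (hmem (0, q)).2 (by simp [hq0])⟩, ?_⟩, rfl⟩
      simp [LinearMap.mem_ker, hπ₁]
  have e₂ : Nonempty ((LinearMap.ker π₂) ≃ₗ[Λ] LinearMap.ker f) := by
    have hc : ∀ z : LinearMap.ker π₂, π₁.comp (LinearMap.ker π₂).subtype z ∈ LinearMap.ker f := by
      rintro ⟨⟨⟨p, q⟩, hz⟩, hz2⟩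
      have hq0 : q = 0 := hz2
      have := (hmem (p, q)).1 hz
      rw [hq0, map_zero] at this
      simpa [LinearMap.mem_ker, hπ₁] using this
    refine ⟨LinearEquiv.ofBijective
      (LinearMap.codRestrict (LinearMap.ker f) (π₁.comp (LinearMap.ker π₂).subtype) hc) ⟨?_, ?_⟩⟩
    · rintro ⟨⟨⟨p, q⟩, hz⟩, hz2⟩ ⟨⟨⟨p', q'⟩, hz'⟩, hz2'⟩ h
      have hp : p = p' := congrArg (fun t => ((t : LinearMap.ker f) : P)) h
      have hq : q = 0 := hz2
      have hq' : q' = 0 := hz2'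
      subst hp; subst hq; subst hq'
      rfl
    · rintro ⟨p, hp⟩
      have hp0 : f p = 0 := hp
      refine ⟨⟨⟨(p, 0), (hmem (p, 0)).2 (by simp [hp0])⟩, ?_⟩, rfl⟩
      simp [LinearMap.mem_ker, hπ₂]
  obtain ⟨u₁⟩ := split_equiv π₁ hπ₁s hP
  obtain ⟨u₂⟩ := split_equiv π₂ hπ₂s hQ
  obtain ⟨e₁⟩ := e₁
  obtain ⟨e₂⟩ := e₂
  exact ⟨((e₂.symm.prodCongr (LinearEquiv.refl Λ Q)).trans u₂).trans
    (u₁.symm.trans (e₁.prodCongr (LinearEquiv.refl Λ P)))⟩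



theorem pdLE_succ_iff (n : ℕ) (M : ModuleCat.{u} Λ) :
    pdLE Λ (n+1) M ↔ ∃ (P : ModuleCat.{u} Λ) (f : P →ₗ[Λ] M),
      Module.Projective Λ P ∧ Function.Surjective f ∧
      pdLE Λ n (ModuleCat.of Λ (LinearMap.ker f)) := Iff.rfl

theorem pdLE_zero_iff (M : ModuleCat.{u} Λ) :
    pdLE Λ 0 M ↔ Module.Projective Λ M := Iff.rfl

/-- Intro rule for `pdLE 1` from unbundled data. -/
theorem pdLE_one_of {X P : Type u} [AddCommGroup X] [Module Λ X] [AddCommGroup P] [Module Λ P]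
    (f : P →ₗ[Λ] X) (h1 : Module.Projective Λ P) (h2 : Surjective f)
    (h3 : Module.Projective Λ (LinearMap.ker f)) : pdLE Λ 1 (ModuleCat.of Λ X) := by
  rw [show (1:ℕ) = 0 + 1 from rfl, pdLE_succ_iff]
  exact ⟨ModuleCat.of Λ P, f, h1, h2, h3⟩

/-- Elim rule for `pdLE 1`. -/
theorem pdLE_one_elim {X : Type u} [AddCommGroup X] [Module Λ X]
    (h : pdLE Λ 1 (ModuleCat.of Λ X)) :
    ∃ (P : Type u) (_ : AddCommGroup P) (_ : Module Λ P) (f : P →ₗ[Λ] X),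
      Module.Projective Λ P ∧ Surjective f ∧ Module.Projective Λ (LinearMap.ker f) := by
  rw [show (1:ℕ) = 0 + 1 from rfl, pdLE_succ_iff] at h
  obtain ⟨P, f, h1, h2, h3⟩ := h
  exact ⟨P, inferInstance, inferInstance, f, h1, h2, h3⟩

theorem pdLE_one_congr {X Y : Type u} [AddCommGroup X] [Module Λ X] [AddCommGroup Y] [Module Λ Y]
    (e : X ≃ₗ[Λ] Y) (h : pdLE Λ 1 (ModuleCat.of Λ X)) : pdLE Λ 1 (ModuleCat.of Λ Y) := by
  obtain ⟨P, _, _, f, h1, h2, h3⟩ := pdLE_one_elim h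
  have hker : LinearMap.ker (e.toLinearMap.comp f) = LinearMap.ker f := by
    ext x
    simp [LinearMap.mem_ker]
  refine pdLE_one_of (e.toLinearMap.comp f) h1 (e.surjective.comp h2) ?_
  rw [hker]; exact h3

theorem pdLE_one_of_projective {X : Type u} [AddCommGroup X] [Module Λ X]
    (h : Module.Projective Λ X) : pdLE Λ 1 (ModuleCat.of Λ X) := by
  refine pdLE_one_of (LinearMap.id (M := X)) h surjective_id ?_
  have : LinearMap.ker (LinearMap.id (R := Λ) (M := X)) = ⊥ := LinearMap.ker_id
  rw [this]
  infer_instance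

/-- Master lemma: a quotient of a `pd ≤ 1` module by a map with projective kernel
has `pd ≤ 1`. -/
theorem pdLE_one_of_surjective {T S : Type u} [AddCommGroup T] [Module Λ T]
    [AddCommGroup S] [Module Λ S] (g : T →ₗ[Λ] S) (hg : Surjective g)
    (hker : Module.Projective Λ (LinearMap.ker g))
    (hT : pdLE Λ 1 (ModuleCat.of Λ T)) : pdLE Λ 1 (ModuleCat.of Λ S) := by
  obtain ⟨P, _, _, p, hP, hps, hkp⟩ := pdLE_one_elim hT
  refine pdLE_one_of (g.comp p) hP (hg.comp hps) ?_
  -- restrict p to a map ker (g ∘ p) → ker g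
  have hmapsto : ∀ x ∈ LinearMap.ker (g.comp p), p x ∈ LinearMap.ker g := by
    intro x hx
    exact hx
  set r : LinearMap.ker (g.comp p) →ₗ[Λ] LinearMap.ker g := p.restrict hmapsto with hr
  have hrs : Surjective r := by
    rintro ⟨y, hy⟩
    obtain ⟨x, hx⟩ := hps y
    have hxk : x ∈ LinearMap.ker (g.comp p) := by
      simp only [LinearMap.mem_ker, LinearMap.comp_apply, hx]
      exact hy
    exact ⟨⟨x, hxk⟩, Subtype.ext hx⟩
  obtain ⟨e⟩ := split_equiv r hrs hker
  have hkerr : Module.Projective Λ (LinearMap.ker r) := by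
    have h1 : LinearMap.ker r = (LinearMap.ker p).comap (LinearMap.ker (g.comp p)).subtype :=
      LinearMap.ker_restrict hmapsto
    have e2 := Submodule.comapSubtypeEquivOfLe (p := LinearMap.ker p)
      (q := LinearMap.ker (g.comp p)) (fun x hx => by
        have hx0 : p x = 0 := hx
        simp only [LinearMap.mem_ker, LinearMap.comp_apply, hx0, map_zero])
    rw [h1]
    exact Module.Projective.of_equiv e2.symm
  haveI := hkerr
  haveI := hker
  exact Module.Projective.of_equiv e

theorem pdLE_one_prod {M N : Type u} [AddCommGroup M] [Module Λ M] [AddCommGroup N] [Module Λ N]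
    (hM : pdLE Λ 1 (ModuleCat.of Λ M)) (hN : Module.Projective Λ N) :
    pdLE Λ 1 (ModuleCat.of Λ (M × N)) := by
  obtain ⟨P, _, _, p, hP, hps, hkp⟩ := pdLE_one_elim hM
  haveI := hP; haveI := hN
  refine pdLE_one_of (p.prodMap (LinearMap.id (M := N))) inferInstance
    (hps.prodMap surjective_id) ?_
  -- ker (p × id) ≃ ker p
  have hc : ∀ z : LinearMap.ker (p.prodMap (LinearMap.id (M := N))),
      (LinearMap.fst Λ P N).comp (LinearMap.ker (p.prodMap (LinearMap.id (M := N)))).subtype z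
        ∈ LinearMap.ker p := by
    rintro ⟨⟨a, b⟩, hz⟩
    have : p a = 0 ∧ b = 0 := by
      simpa [LinearMap.mem_ker, Prod.ext_iff] using hz
    exact this.1
  have e : LinearMap.ker (p.prodMap (LinearMap.id (M := N))) ≃ₗ[Λ] LinearMap.ker p := by
    refine LinearEquiv.ofBijective (LinearMap.codRestrict _ _ hc) ⟨?_, ?_⟩
    · rintro ⟨⟨a, b⟩, hz⟩ ⟨⟨a', b'⟩, hz'⟩ h
      have hb : b = 0 := by
        have : p a = 0 ∧ b = 0 := by simpa [LinearMap.mem_ker, Prod.ext_iff] using hz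
        exact this.2
      have hb' : b' = 0 := by
        have : p a' = 0 ∧ b' = 0 := by simpa [LinearMap.mem_ker, Prod.ext_iff] using hz'
        exact this.2
      have ha : a = a' := congrArg (fun t => ((t : LinearMap.ker p) : P)) h
      subst ha hb hb'
      rfl
    · rintro ⟨a, ha⟩
      refine ⟨⟨(a, 0), ?_⟩, rfl⟩
      simp only [LinearMap.mem_ker, LinearMap.prodMap_apply, LinearMap.id_apply, Prod.ext_iff]
      exact ⟨ha, rfl⟩
  haveI := hkp
  exact Module.Projective.of_equiv e.symm

theorem pdLE_one_of_prod_left {M N : Type u} [AddCommGroup M] [Module Λ M]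
    [AddCommGroup N] [Module Λ N]
    (h : pdLE Λ 1 (ModuleCat.of Λ (M × N))) (hN : Module.Projective Λ N) :
    pdLE Λ 1 (ModuleCat.of Λ M) := by
  refine pdLE_one_of_surjective (LinearMap.fst Λ M N) (fun m => ⟨(m, 0), rfl⟩) ?_ h
  have e : LinearMap.ker (LinearMap.fst Λ M N) ≃ₗ[Λ] N := by
    refine LinearEquiv.ofBijective
      ((LinearMap.snd Λ M N).comp (LinearMap.ker (LinearMap.fst Λ M N)).subtype) ⟨?_, ?_⟩
    · rintro ⟨⟨a, b⟩, hz⟩ ⟨⟨a', b'⟩, hz'⟩ hh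
      have ha : a = 0 := hz
      have ha' : a' = 0 := hz'
      have hb : b = b' := hh
      subst ha ha' hb
      rfl
    · intro n
      exact ⟨⟨(0, n), rfl⟩, rfl⟩
  haveI := hN
  exact Module.Projective.of_equiv e.symm

/-- Over a ring with `gldim ≤ 2` (on f.g. modules): a submodule `S` of a module `C`
with `pd C ≤ 1` such that `C ⧸ S` is f.g. has `pd S ≤ 1`. -/
theorem pdLE_one_submodule {C : Type u} [AddCommGroup C] [Module Λ C]
    (hC : pdLE Λ 1 (ModuleCat.of Λ C)) (S : Submodule Λ C)
    (hq : pdLE Λ 2 (ModuleCat.of Λ (C ⧸ S))) : pdLE Λ 1 (ModuleCat.of Λ S) := by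
  obtain ⟨P, _, _, p, hP, hps, hkp⟩ := pdLE_one_elim hC
  -- unfold hq
  rw [show (2:ℕ) = 1 + 1 from rfl, pdLE_succ_iff] at hq
  obtain ⟨P₂, q₂, hP₂, hq₂s, hq₂1⟩ := hq
  -- first syzygy sequence for C/S through P
  set c₁ : P →ₗ[Λ] C ⧸ S := S.mkQ.comp p with hc₁
  have hc₁s : Surjective c₁ := (Submodule.mkQ_surjective S).comp hps
  obtain ⟨e⟩ := schanuel c₁ q₂ hc₁s hq₂s hP hP₂
  -- pd1 (ker q₂ × P)
  have h1 : pdLE Λ 1 (ModuleCat.of Λ (LinearMap.ker q₂ × P)) := pdLE_one_prod hq₂1 hP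
  have h2 : pdLE Λ 1 (ModuleCat.of Λ (LinearMap.ker c₁ × P₂)) := pdLE_one_congr e.symm h1
  have h3 : pdLE Λ 1 (ModuleCat.of Λ (LinearMap.ker c₁)) := pdLE_one_of_prod_left h2 hP₂
  -- restrict p : ker c₁ → S
  have hmapsto : ∀ x ∈ LinearMap.ker c₁, p x ∈ S := by
    intro x hx
    have : S.mkQ (p x) = 0 := hx
    simpa [Submodule.Quotient.mk_eq_zero] using this
  set r : LinearMap.ker c₁ →ₗ[Λ] S := p.restrict hmapsto with hrdef
  have hrs : Surjective r := by
    rintro ⟨y, hy⟩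
    obtain ⟨x, hx⟩ := hps y
    have hxk : x ∈ LinearMap.ker c₁ := by
      show S.mkQ (p x) = 0
      rw [hx]
      simpa [Submodule.Quotient.mk_eq_zero] using hy
    exact ⟨⟨x, hxk⟩, Subtype.ext hx⟩
  have hkerr : Module.Projective Λ (LinearMap.ker r) := by
    have h1' : LinearMap.ker r = (LinearMap.ker p).comap (LinearMap.ker c₁).subtype :=
      LinearMap.ker_restrict hmapsto
    have e2 := Submodule.comapSubtypeEquivOfLe (p := LinearMap.ker p)
      (q := LinearMap.ker c₁) (fun x hx => by
        show S.mkQ (p x) = 0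
        rw [LinearMap.mem_ker.mp hx, map_zero])
    rw [h1']
    haveI := hkp
    exact Module.Projective.of_equiv e2.symm
  exact pdLE_one_of_surjective r hrs hkerr h3



open LinearMap Submodule Function

section Coind

variable (k Λ : Type u) [Field k] [Ring Λ] [Algebra k Λ]
variable (M : Type u) [AddCommGroup M] [Module k M] [Module Λ M] [IsScalarTower k Λ M]

/-- The coinduced module `Hom_k(Λ, M)` with `Λ`-action `(a • φ) x = φ (x * a)`. -/
def Coind : Type u := Λ →ₗ[k] M

namespace Coind

variable {k Λ M}

instance : AddCommGroup (Coind k Λ M) := inferInstanceAs (AddCommGroup (Λ →ₗ[k] M))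

instance : FunLike (Coind k Λ M) Λ M := inferInstanceAs (FunLike (Λ →ₗ[k] M) Λ M)

theorem ext' {φ ψ : Coind k Λ M} (h : ∀ x, φ x = ψ x) : φ = ψ :=
  DFunLike.ext φ ψ h

/-- Construct an element of `Coind` from a `k`-linear map. -/
def mk' (φ : Λ →ₗ[k] M) : Coind k Λ M := φ

@[simp] theorem mk'_apply (φ : Λ →ₗ[k] M) (x : Λ) : mk' (M := M) φ x = φ x := rfl

@[simp] theorem add_apply (φ ψ : Coind k Λ M) (x : Λ) : (φ + ψ) x = φ x + ψ x := rfl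
@[simp] theorem zero_apply (x : Λ) : (0 : Coind k Λ M) x = 0 := rfl
theorem map_addX (φ : Coind k Λ M) (x y : Λ) : φ (x + y) = φ x + φ y :=
  (mk' φ : Λ →ₗ[k] M).map_add x y
theorem map_ksmul (φ : Coind k Λ M) (c : k) (x : Λ) : φ (c • x) = c • φ x :=
  (mk' φ : Λ →ₗ[k] M).map_smul c x

instance : SMul Λ (Coind k Λ M) :=
  ⟨fun a φ => mk' ((mk' φ : Λ →ₗ[k] M).comp (LinearMap.mulRight k a))⟩

@[simp] theorem smul_apply (a : Λ) (φ : Coind k Λ M) (x : Λ) : (a • φ) x = φ (x * a) := rfl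

instance : Module Λ (Coind k Λ M) where
  one_smul φ := ext' fun x => by simp
  mul_smul a b φ := ext' fun x => by simp [mul_assoc]
  smul_zero a := ext' fun x => rfl
  smul_add a φ ψ := ext' fun x => rfl
  add_smul a b φ := ext' fun x => by
    show φ (x * (a + b)) = φ (x * a) + φ (x * b)
    rw [mul_add, map_addX]
  zero_smul φ := ext' fun x => by
    show φ (x * 0) = 0
    rw [mul_zero]
    exact (mk' φ : Λ →ₗ[k] M).map_zero

instance : Module k (Coind k Λ M) := inferInstanceAs (Module k (Λ →ₗ[k] M))

theorem ksmul_apply (c : k) (φ : Coind k Λ M) (x : Λ) : (c • φ) x = c • φ x := rfl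

instance : IsScalarTower k Λ (Coind k Λ M) := by
  constructor
  intro c a φ
  apply ext'
  intro x
  show φ (x * (c • a)) = c • φ (x * a)
  have h1 : x * (c • a) = c • (x * a) := by
    rw [Algebra.smul_def, Algebra.smul_def, ← mul_assoc, ← Algebra.commutes c x, mul_assoc]
  rw [h1, map_ksmul]

/-- The canonical `Λ`-linear embedding `M → Coind k Λ M`. -/
def counit : M →ₗ[Λ] Coind k Λ M where
  toFun m := mk' { toFun := fun x => x • m,
                   map_add' := fun x y => add_smul x y m,
                   map_smul' := fun c x => smul_assoc c x m }
  map_add' m n := ext' fun x => smul_add x m n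
  map_smul' a m := ext' fun x => by
    show x • (a • m) = (x * a) • m
    rw [mul_smul]

@[simp] theorem counit_apply (m : M) (x : Λ) : counit (k := k) m x = x • m := rfl

theorem counit_injective : Function.Injective (counit (k := k) (Λ := Λ) (M := M)) := by
  intro m n h
  have := congrArg (fun φ => (φ : Coind k Λ M) 1) h
  simpa using this

theorem injective : Module.Injective Λ (Coind k Λ M) := by
  constructor
  intro X Y _ _ _ _ f hf g
  letI : Module k X := Module.compHom X (algebraMap k Λ)
  letI : Module k Y := Module.compHom Y (algebraMap k Λ)
  have hsX : ∀ (c : k) (x : X), c • x = algebraMap k Λ c • x := fun _ _ => rfl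
  have hsY : ∀ (c : k) (y : Y), c • y = algebraMap k Λ c • y := fun _ _ => rfl
  -- g₀ : X →ₗ[k] M
  let g₀ : X →ₗ[k] M :=
    { toFun := fun x => g x 1
      map_add' := fun x y => by
        show g (x + y) 1 = g x 1 + g y 1
        rw [map_add]
        rfl
      map_smul' := fun c x => by
        show g (algebraMap k Λ c • x) 1 = c • g x 1
        rw [map_smul]
        show (g x) (1 * algebraMap k Λ c) = c • g x 1
        rw [one_mul, Algebra.algebraMap_eq_smul_one, map_ksmul] }
  -- f as a k-linear map
  let fk : X →ₗ[k] Y :=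
    { toFun := f
      map_add' := f.map_add
      map_smul' := fun c x => by
        show f (algebraMap k Λ c • x) = c • f x
        rw [f.map_smul]
        rfl }
  have hfk : Injective fk := hf
  -- extend g₀ along fk using that k is a field
  let eq1 : X ≃ₗ[k] LinearMap.range fk := LinearEquiv.ofInjective fk hfk
  obtain ⟨h₀, hh₀⟩ := LinearMap.exists_extend (g₀.comp (eq1.symm.toLinearMap))
  have hext : ∀ x : X, h₀ (fk x) = g₀ x := by
    intro x
    have h1 : ((LinearMap.range fk).subtype) (eq1 x) = fk x := rfl
    have := LinearMap.congr_fun hh₀ (eq1 x)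
    simp only [LinearMap.comp_apply] at this
    rw [h1] at this
    rw [this]
    simp [eq1]
  -- build the Λ-linear extension
  let inner : Y → Coind k Λ M := fun y => mk'
    { toFun := fun x => h₀ (x • y)
      map_add' := fun x x' => by
        show h₀ ((x + x') • y) = h₀ (x • y) + h₀ (x' • y)
        rw [add_smul, map_add]
      map_smul' := fun c x => by
        show h₀ ((c • x) • y) = c • h₀ (x • y)
        have h1 : (c • x) • y = algebraMap k Λ c • (x • y) := by
          rw [Algebra.smul_def, mul_smul]
        rw [h1, ← hsY, map_smul] }
  have inner_apply : ∀ (y : Y) (x : Λ), inner y x = h₀ (x • y) := fun y x => rfl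
  let H : Y →ₗ[Λ] Coind k Λ M :=
    { toFun := inner
      map_add' := fun y y' => ext' fun x => by
        rw [inner_apply]
        show h₀ (x • (y + y')) = (inner y) x + (inner y') x
        rw [inner_apply, inner_apply, smul_add, map_add]
      map_smul' := fun a y => ext' fun x => by
        show inner (a • y) x = (a • inner y) x
        rw [smul_apply, inner_apply, inner_apply, mul_smul] }
  refine ⟨H, ?_⟩
  intro x₀
  apply ext'
  intro x
  show h₀ (x • f x₀) = g x₀ x
  have h1 : x • f x₀ = fk (x • x₀) := (f.map_smul x x₀).symm
  rw [h1, hext]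
  show g (x • x₀) 1 = g x₀ x
  rw [g.map_smul]
  show (g x₀) (1 * x) = g x₀ x
  rw [one_mul]

theorem finite [FiniteDimensional k Λ] [Module.Finite k M] :
    Module.Finite Λ (Coind k Λ M) := by
  haveI : Module.Finite k (Coind k Λ M) :=
    inferInstanceAs (Module.Finite k (Λ →ₗ[k] M))
  exact Module.Finite.of_restrictScalars_finite k Λ (Coind k Λ M)

end Coind

end Coind



section Essential

variable {E : Type u} [AddCommGroup E] [Module Λ E]

/-- `N` is an essential extension of `A` (inside `E`). -/
def Essential (A N : Submodule Λ E) : Prop :=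
  A ≤ N ∧ ∀ W : Submodule Λ E, W ≤ N → W ≠ ⊥ → W ⊓ A ≠ ⊥

theorem essential_self (A : Submodule Λ E) : Essential A A :=
  ⟨le_rfl, fun W hW hWne => by rwa [inf_eq_left.mpr hW]⟩

theorem exists_maximal_essential (A : Submodule Λ E) :
    ∃ N, Essential A N ∧ ∀ N', Essential A N' → N ≤ N' → N' = N := by
  have h := zorn_le_nonempty₀ {N : Submodule Λ E | Essential A N} ?_ A (essential_self A)
  · obtain ⟨N, _, hNmax⟩ := h
    exact ⟨N, hNmax.1, fun N' hN' hle => le_antisymm (hNmax.2 hN' hle) hle⟩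
  · intro c hcs hchain y hy
    refine ⟨sSup c, ⟨le_trans (hcs hy).1 (le_sSup hy), ?_⟩, fun z hz => le_sSup hz⟩
    intro W hWle hWne
    obtain ⟨w, hwW, hw0⟩ := (Submodule.ne_bot_iff W).mp hWne
    have hwmem : w ∈ sSup c := hWle hwW
    have hex : ∃ N₀ ∈ c, w ∈ N₀ := by
      haveI : Nonempty c := ⟨⟨y, hy⟩⟩
      have hdir : Directed (· ≤ ·) (fun N : c => (N : Submodule Λ E)) := by
        intro a b
        rcases hchain.total a.2 b.2 with h | h
        exacts [⟨b, h, le_rfl⟩, ⟨a, le_rfl, h⟩]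
      rw [sSup_eq_iSup'] at hwmem
      obtain ⟨⟨N₀, hN₀⟩, hmem⟩ := (Submodule.mem_iSup_of_directed _ hdir).mp hwmem
      exact ⟨N₀, hN₀, hmem⟩
    obtain ⟨N₀, hN₀c, hwN₀⟩ := hex
    have hspan : (Λ ∙ w) ≤ N₀ := (Submodule.span_singleton_le_iff_mem w N₀).mpr hwN₀
    have hspanW : (Λ ∙ w) ≤ W := (Submodule.span_singleton_le_iff_mem w W).mpr hwW
    have hspanne : (Λ ∙ w) ≠ ⊥ := by
      rw [Ne, Submodule.span_singleton_eq_bot]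
      exact hw0
    have hkey := (hcs hN₀c).2 (Λ ∙ w) hspan hspanne
    intro hbot
    exact hkey (le_bot_iff.mp (hbot ▸ inf_le_inf_right A hspanW))

theorem exists_maximal_disjoint (N : Submodule Λ E) :
    ∃ N'', N ⊓ N'' = ⊥ ∧ ∀ W, N'' ≤ W → N ⊓ W = ⊥ → W = N'' := by
  have h := zorn_le_nonempty₀ {P : Submodule Λ E | N ⊓ P = ⊥} ?_ ⊥ (by simp)
  · obtain ⟨N'', _, hmax⟩ := h
    exact ⟨N'', hmax.1, fun W hle hW => le_antisymm (hmax.2 hW hle) hle⟩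
  · intro c hcs hchain y hy
    refine ⟨sSup c, ?_, fun z hz => le_sSup hz⟩
    show N ⊓ sSup c = ⊥
    rw [eq_bot_iff]
    intro x hx
    have hxN : x ∈ N := (Submodule.mem_inf.mp hx).1
    have hxs : x ∈ sSup c := (Submodule.mem_inf.mp hx).2
    have hex : ∃ N₀ ∈ c, x ∈ N₀ := by
      haveI : Nonempty c := ⟨⟨y, hy⟩⟩
      have hdir : Directed (· ≤ ·) (fun P : c => (P : Submodule Λ E)) := by
        intro a b
        rcases hchain.total a.2 b.2 with h | h
        exacts [⟨b, h, le_rfl⟩, ⟨a, le_rfl, h⟩]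
      rw [sSup_eq_iSup'] at hxs
      obtain ⟨⟨N₀, hN₀⟩, hmem⟩ := (Submodule.mem_iSup_of_directed _ hdir).mp hxs
      exact ⟨N₀, hN₀, hmem⟩
    obtain ⟨N₀, hN₀c, hxN₀⟩ := hex
    have : x ∈ N ⊓ N₀ := Submodule.mem_inf.mpr ⟨hxN, hxN₀⟩
    rw [hcs hN₀c] at this
    exact this

/-- A maximal essential extension inside an injective module is a direct summand. -/
theorem isCompl_of_maximal_essential [Module.Injective Λ E] (A N : Submodule Λ E)
    (hN : Essential A N) (hmax : ∀ N', Essential A N' → N ≤ N' → N' = N) :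
    ∃ N'', IsCompl N N'' := by
  obtain ⟨N'', hdisj, hdmax⟩ := exists_maximal_disjoint N
  set q : E →ₗ[Λ] E ⧸ N'' := N''.mkQ with hqdef
  have hkerq : LinearMap.ker q = N'' := Submodule.ker_mkQ N''
  set qN : N →ₗ[Λ] E ⧸ N'' := q.comp N.subtype with hqNdef
  have hqNinj : Injective qN := by
    rw [← LinearMap.ker_eq_bot, hqNdef, LinearMap.ker_comp, hkerq, eq_bot_iff]
    intro x hx
    have : (x : E) ∈ N ⊓ N'' := Submodule.mem_inf.mpr ⟨x.2, hx⟩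
    rw [hdisj] at this
    exact (Submodule.mem_bot Λ).mp (by simpa using this)
  -- image of N is essential in E/N''
  have hess : ∀ W : Submodule Λ (E ⧸ N''), W ≠ ⊥ → W ⊓ Submodule.map q N ≠ ⊥ := by
    intro W hWne
    set V : Submodule Λ E := W.comap q with hVdef
    have hN''V : N'' ≤ V := by
      intro x hx
      show q x ∈ W
      have : q x = 0 := by
        rw [← LinearMap.mem_ker, hkerq]
        exact hx
      rw [this]
      exact W.zero_mem
    have hVne : V ≠ N'' := by
      intro hVeq
      apply hWne
      have hmapV : Submodule.map q V = W := by
        rw [hVdef, Submodule.map_comap_eq, LinearMap.range_eq_top.mpr (Submodule.mkQ_surjective N''), top_inf_eq]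
      rw [← hmapV, hVeq]
      rw [eq_bot_iff]
      rintro z ⟨x, hxN'', hz⟩
      rw [← hz]
      have : q x = 0 := by
        rw [← LinearMap.mem_ker, hkerq]; exact hxN''
      rw [this]
      exact (Submodule.mem_bot Λ).mpr rfl
    have hNV : N ⊓ V ≠ ⊥ := fun hbot => hVne (hdmax V hN''V hbot)
    obtain ⟨x, hxmem, hx0⟩ := (Submodule.ne_bot_iff _).mp hNV
    have hxN : x ∈ N := (Submodule.mem_inf.mp hxmem).1
    have hxV : x ∈ V := (Submodule.mem_inf.mp hxmem).2
    rw [Submodule.ne_bot_iff]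
    refine ⟨q x, Submodule.mem_inf.mpr ⟨hxV, Submodule.mem_map_of_mem hxN⟩, ?_⟩
    intro hq0
    apply hx0
    have hxN'' : x ∈ N'' := by
      rw [← hkerq]
      exact hq0
    have : x ∈ N ⊓ N'' := Submodule.mem_inf.mpr ⟨hxN, hxN''⟩
    rw [hdisj] at this
    simpa using this
  -- extend the inverse of qN along qN using injectivity of E
  obtain ⟨h, hh⟩ := Module.Injective.out qN hqNinj N.subtype
  have hhq : ∀ (n : E) (hn : n ∈ N), h (q n) = n := by
    intro n hn
    exact hh ⟨n, hn⟩
  have hinj : Injective h := by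
    rw [← LinearMap.ker_eq_bot]
    by_contra hker
    have h1 : LinearMap.ker h ⊓ Submodule.map q N ≠ ⊥ := hess _ hker
    obtain ⟨z, hzmem, hz0⟩ := (Submodule.ne_bot_iff _).mp h1
    have hzker : h z = 0 := (Submodule.mem_inf.mp hzmem).1
    obtain ⟨n, hnN, hnz⟩ := (Submodule.mem_inf.mp hzmem).2
    have hn : h z = n := by
      rw [← hnz]
      exact hhq n hnN
    apply hz0
    rw [← hnz, ← hn, hzker, map_zero]
  set L : Submodule Λ E := LinearMap.range h with hLdef
  have hNL : N ≤ L := fun n hn => ⟨qN ⟨n, hn⟩, hh ⟨n, hn⟩⟩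
  have hLess : Essential A L := by
    constructor
    · exact le_trans hN.1 hNL
    · intro W hWL hWne
      have hcne : W.comap h ≠ ⊥ := by
        intro hbot
        apply hWne
        have hmc : Submodule.map h (W.comap h) = W := by
          rw [Submodule.map_comap_eq, inf_eq_right.mpr hWL]
        rw [← hmc, hbot, Submodule.map_bot]
      have h2 : W.comap h ⊓ Submodule.map q N ≠ ⊥ := hess _ hcne
      obtain ⟨z, hzmem, hz0⟩ := (Submodule.ne_bot_iff _).mp h2
      have hzW : h z ∈ W := (Submodule.mem_inf.mp hzmem).1
      obtain ⟨n, hnN, hnz⟩ := (Submodule.mem_inf.mp hzmem).2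
      have hhz : h z = n := by rw [← hnz]; exact hhq n hnN
      have hhz0 : h z ≠ 0 := fun h0 => hz0 (by
        have : h z = h 0 := by rw [h0, map_zero]
        exact hinj this)
      have hWN : W ⊓ N ≠ ⊥ := by
        rw [Submodule.ne_bot_iff]
        exact ⟨h z, Submodule.mem_inf.mpr ⟨hzW, hhz ▸ hnN⟩, hhz0⟩
      have hkey := hN.2 (W ⊓ N) inf_le_right hWN
      intro hbot
      apply hkey
      rw [eq_bot_iff] at hbot ⊢
      intro x hx
      exact hbot (Submodule.mem_inf.mpr
        ⟨(Submodule.mem_inf.mp (Submodule.mem_inf.mp hx).1).1, (Submodule.mem_inf.mp hx).2⟩)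
  have hLN : L = N := hmax L hLess hNL
  refine ⟨N'', ⟨disjoint_iff.mpr hdisj, codisjoint_iff.mpr ?_⟩⟩
  rw [eq_top_iff]
  intro y _
  have hyL : h (q y) ∈ N := by
    rw [← hLN]
    exact ⟨q y, rfl⟩
  set n : E := h (q y) with hndef
  have hqn : q n = q y := by
    apply hinj
    have h3 : h (q n) = n := hhq n hyL
    rw [h3]
  have hyn : y - n ∈ N'' := by
    rw [← hkerq, LinearMap.mem_ker, map_sub, hqn, sub_self]
  have : y = n + (y - n) := by abel
  rw [this]
  exact Submodule.add_mem_sup hyL hyn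

/-- A direct summand of an injective module is injective. -/
theorem injective_of_isCompl [Module.Injective Λ E] (N N'' : Submodule Λ E)
    (hc : IsCompl N N'') : Module.Injective Λ N := by
  constructor
  intro X Y _ _ _ _ f hf g
  obtain ⟨h, hh⟩ := Module.Injective.out f hf (N.subtype.comp g)
  refine ⟨(N.linearProjOfIsCompl N'' hc).comp h, fun x => ?_⟩
  rw [LinearMap.comp_apply, hh x]
  exact Submodule.linearProjOfIsCompl_apply_left hc (g x)

/-- Transfer essentiality from the ambient module to the submodule. -/
theorem essential_restrict {M : Type u} [AddCommGroup M] [Module Λ M]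
    (f : M →ₗ[Λ] E) (N : Submodule Λ E) (hfN : ∀ m, f m ∈ N)
    (hess : Essential (LinearMap.range f) N) :
    ∀ W : Submodule Λ N, W ≠ ⊥ →
      W ⊓ LinearMap.range (f.codRestrict N hfN) ≠ ⊥ := by
  intro W hWne
  have hWm : Submodule.map N.subtype W ≠ ⊥ := by
    intro hbot
    apply hWne
    rw [eq_bot_iff]
    intro w hw
    have : (w : E) ∈ Submodule.map N.subtype W := ⟨w, hw, rfl⟩
    rw [hbot] at this
    have hw0 : (w : E) = 0 := by simpa using this
    have : w = 0 := Subtype.ext hw0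
    rw [this]
    exact Submodule.zero_mem ⊥
  have h1 := hess.2 (Submodule.map N.subtype W) (Submodule.map_subtype_le N W) hWm
  obtain ⟨x, hxmem, hx0⟩ := (Submodule.ne_bot_iff _).mp h1
  obtain ⟨w, hwW, hwx⟩ := (Submodule.mem_inf.mp hxmem).1
  obtain ⟨m, hmx⟩ := (Submodule.mem_inf.mp hxmem).2
  rw [Submodule.ne_bot_iff]
  refine ⟨w, Submodule.mem_inf.mpr ⟨hwW, ⟨m, ?_⟩⟩, ?_⟩
  · apply Subtype.ext
    show f m = (w : E)
    rw [hmx]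
    exact hwx.symm
  · intro hw0
    apply hx0
    rw [← hwx, hw0]
    exact map_zero N.subtype

end Essential

section Socle

variable {Λ : Type u} [Ring Λ]

theorem socle_le_of_essential {I : Type u} [AddCommGroup I] [Module Λ I] (A : Submodule Λ I)
    (h : ∀ W : Submodule Λ I, W ≠ ⊥ → W ⊓ A ≠ ⊥) : socle Λ I ≤ A := by
  apply sSup_le
  intro S hS
  haveI hS' : IsSimpleModule Λ S := hS
  have hSne : S ≠ ⊥ := by
    intro hbot
    haveI : Subsingleton S := by rw [hbot]; infer_instance
    haveI : Subsingleton (Submodule Λ S) := by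
      constructor
      intro a b
      ext x
      have hx0 : x = 0 := Subsingleton.elim x 0
      simp [hx0]
    exact false_of_nontrivial_of_subsingleton (Submodule Λ S)
  have h1 : S ⊓ A ≠ ⊥ := h S hSne
  obtain ⟨x, hxmem, hx0⟩ := (Submodule.ne_bot_iff _).mp h1
  have h2 : (Submodule.comap S.subtype A) ≠ ⊥ := by
    rw [Submodule.ne_bot_iff]
    refine ⟨⟨x, (Submodule.mem_inf.mp hxmem).1⟩, (Submodule.mem_inf.mp hxmem).2, ?_⟩
    intro h0
    exact hx0 (congrArg Subtype.val h0)
  have h3 : Submodule.comap S.subtype A = ⊤ :=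
    (eq_bot_or_eq_top (Submodule.comap S.subtype A)).resolve_left h2
  intro s hs
  have : (⟨s, hs⟩ : S) ∈ Submodule.comap S.subtype A := h3 ▸ Submodule.mem_top
  exact this

theorem comap_socle_equiv {M I : Type u} [AddCommGroup M] [Module Λ M]
    [AddCommGroup I] [Module Λ I]
    (f : M →ₗ[Λ] I) (hf : Function.Injective f) (hle : socle Λ I ≤ LinearMap.range f) :
    Nonempty ((Submodule.comap f (socle Λ I)) ≃ₗ[Λ] socle Λ I) := by
  have hmaps : ∀ x ∈ Submodule.comap f (socle Λ I), f x ∈ socle Λ I := fun x hx => hx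
  refine ⟨LinearEquiv.ofBijective (f.restrict hmaps) ⟨?_, ?_⟩⟩
  · intro a b h
    apply Subtype.ext
    apply hf
    exact congrArg Subtype.val h
  · rintro ⟨y, hy⟩
    obtain ⟨x, hx⟩ := hle hy
    exact ⟨⟨x, by rw [Submodule.mem_comap, hx]; exact hy⟩, Subtype.ext hx⟩

end Socle

section Envelope

variable (k Λ : Type u) [Field k] [Ring Λ] [Algebra k Λ]
variable (M : Type u) [AddCommGroup M] [Module k M] [Module Λ M] [IsScalarTower k Λ M]

/-- Every module embeds essentially into an injective module (inside `Coind`). -/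
theorem exists_envelope :
    ∃ (N : Submodule Λ (Coind k Λ M)) (f : M →ₗ[Λ] N),
      Module.Injective Λ N ∧ Function.Injective f ∧
      (∀ W : Submodule Λ N, W ≠ ⊥ → W ⊓ LinearMap.range f ≠ ⊥) := by
  haveI := Coind.injective (k := k) (Λ := Λ) (M := M)
  obtain ⟨N, hNess, hNmax⟩ :=
    exists_maximal_essential (LinearMap.range (Coind.counit (k := k) (Λ := Λ) (M := M)))
  obtain ⟨N'', hcompl⟩ := isCompl_of_maximal_essential _ N hNess hNmax
  have hfN : ∀ m, Coind.counit (k := k) m ∈ N := fun m => hNess.1 ⟨m, rfl⟩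
  refine ⟨N, (Coind.counit (k := k) (Λ := Λ) (M := M)).codRestrict N hfN,
    injective_of_isCompl N N'' hcompl, ?_, ?_⟩
  · intro a b h
    exact Coind.counit_injective (congrArg Subtype.val h)
  · exact essential_restrict _ N hfN hNess

end Envelope

end Stmt13Aux


open Stmt13Aux in
/-- A finite dimensional algebra of global dimension at most `2` in which every
injective module whose socle has projective dimension at most `1` is projective
is an Auslander algebra. -/
theorem stmt_13 (k Λ : Type u) [Field k] [Ring Λ] [Algebra k Λ] [FiniteDimensional k Λ]
    (hgl : gldimLE Λ 2)
    (hinj : ∀ (I : Type u) [AddCommGroup I] [Module Λ I], Module.Injective Λ I →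
      pdLE Λ 1 (ModuleCat.of Λ ↥(socle Λ I)) → Module.Projective Λ I) :
    IsAuslander Λ := by
  refine ⟨hgl, ?_⟩
  -- Step 1: injective envelope of Λ
  obtain ⟨N₀, f₀, hI₀inj, hf₀inj, hess₀⟩ := exists_envelope k Λ Λ
  -- finiteness of the envelope
  haveI hNoethCoind : IsNoetherian Λ (Coind k Λ Λ) := by
    haveI h1 : Module.Finite k (Coind k Λ Λ) :=
      inferInstanceAs (Module.Finite k (Λ →ₗ[k] Λ))
    haveI h2 : IsNoetherian k (Coind k Λ Λ) := IsNoetherian.iff_fg.mpr h1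
    exact isNoetherian_of_tower k h2
  haveI hfinN₀ : Module.Finite Λ N₀ :=
    Module.Finite.iff_fg.mpr (IsNoetherian.noetherian N₀)
  -- Step 2: the socle of the envelope has projective dimension ≤ 1
  have hsoc₀le : socle Λ N₀ ≤ LinearMap.range f₀ := socle_le_of_essential _ hess₀
  obtain ⟨esoc₀⟩ := comap_socle_equiv f₀ hf₀inj hsoc₀le
  have hpdΛ : pdLE Λ 1 (ModuleCat.of Λ Λ) := pdLE_one_of_projective inferInstance
  have hfinquot : Module.Finite Λ (Λ ⧸ Submodule.comap f₀ (socle Λ N₀)) :=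
    Module.Finite.of_surjective (Submodule.comap f₀ (socle Λ N₀)).mkQ
      (Submodule.mkQ_surjective _)
  have hpdJ : pdLE Λ 1 (ModuleCat.of Λ (Submodule.comap f₀ (socle Λ N₀))) :=
    pdLE_one_submodule hpdΛ _
      (hgl (ModuleCat.of Λ (Λ ⧸ Submodule.comap f₀ (socle Λ N₀))) hfinquot)
  have hpdsoc₀ : pdLE Λ 1 (ModuleCat.of Λ (socle Λ N₀)) := pdLE_one_congr esoc₀ hpdJ
  have hprojI₀ : Module.Projective Λ N₀ := hinj N₀ hI₀inj hpdsoc₀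
  -- Step 3: the cokernel C and its envelope
  have hpdC : pdLE Λ 1 (ModuleCat.of Λ ((↥N₀) ⧸ LinearMap.range f₀)) := by
    refine pdLE_one_of (LinearMap.range f₀).mkQ hprojI₀ (Submodule.mkQ_surjective _) ?_
    rw [Submodule.ker_mkQ]
    exact Module.Projective.of_equiv (LinearEquiv.ofInjective f₀ hf₀inj)
  haveI hfinC : Module.Finite Λ ((↥N₀) ⧸ LinearMap.range f₀) :=
    Module.Finite.of_surjective (LinearMap.range f₀).mkQ (Submodule.mkQ_surjective _)
  obtain ⟨N₁, f₁, hI₁inj, hf₁inj, hess₁⟩ := exists_envelope k Λ ((↥N₀) ⧸ LinearMap.range f₀)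
  -- Step 4: the socle of the second envelope has projective dimension ≤ 1
  have hsoc₁le : socle Λ N₁ ≤ LinearMap.range f₁ := socle_le_of_essential _ hess₁
  obtain ⟨esoc₁⟩ := comap_socle_equiv f₁ hf₁inj hsoc₁le
  haveI hfinq : Module.Finite Λ
      (((↥N₀) ⧸ LinearMap.range f₀) ⧸ Submodule.comap f₁ (socle Λ N₁)) :=
    Module.Finite.of_surjective (Submodule.comap f₁ (socle Λ N₁)).mkQ
      (Submodule.mkQ_surjective _)
  have hpdS' : pdLE Λ 1 (ModuleCat.of Λ (Submodule.comap f₁ (socle Λ N₁))) :=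
    pdLE_one_submodule hpdC _
      (hgl (ModuleCat.of Λ
        (((↥N₀) ⧸ LinearMap.range f₀) ⧸ Submodule.comap f₁ (socle Λ N₁))) hfinq)
  have hpdsoc₁ : pdLE Λ 1 (ModuleCat.of Λ (socle Λ N₁)) := pdLE_one_congr esoc₁ hpdS'
  have hprojI₁ : Module.Projective Λ N₁ := hinj N₁ hI₁inj hpdsoc₁
  -- Step 5: assemble
  refine ⟨ModuleCat.of Λ N₀, ModuleCat.of Λ N₁, f₀,
    f₁.comp (LinearMap.range f₀).mkQ, hI₀inj, hprojI₀, hI₁inj, hprojI₁, hf₀inj, ?_⟩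
  rw [LinearMap.ker_comp, LinearMap.ker_eq_bot.mpr hf₁inj, Submodule.comap_bot,
    Submodule.ker_mkQ]
end
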